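/- arXiv:1712.08829 — 8 statements merged into one kernel-verified Lean document; each statement's English description precedes it below -/
import Mathlib

section
/- Let q > 2. Then lim_{γ → γ_max⁻} M_q(γ) = 2π/√(q+2). -/
open Real Set Filter MeasureTheory

noncomputable section

/-- `f(t) = t - γ·t^{q/2+1} - 1`. -/
def f (q γ : ℝ) : ℝ → ℝ := fun t => t - γ * t ^ (q / 2 + 1) - 1

/-- `γ_max = (2/(q+2))·(1 + 2/q)^{-q/2}`. -/
def gammaMax (q : ℝ) : ℝ := 2 / (q + 2) * (1 + 2 / q) ^ (-(q / 2))

/-- The hypothesis that `t₁ γ < t₂ γ` are the two positive zeros of `f(q, γ, ·)`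
for every `γ ∈ (0, γ_max)`. -/
def AreRoots (q : ℝ) (t₁ t₂ : ℝ → ℝ) : Prop :=
  ∀ γ ∈ Ioo 0 (gammaMax q),
    0 < t₁ γ ∧ t₁ γ < t₂ γ ∧ f q γ (t₁ γ) = 0 ∧ f q γ (t₂ γ) = 0 ∧
      ∀ t, 0 < t → f q γ t = 0 → t = t₁ γ ∨ t = t₂ γ

/-- The hypothesis that `M γ = ∫_{t₁ γ}^{t₂ γ} dt/(t·√(f t))` for every `γ ∈ (0, γ_max)`. -/
def IsM (q : ℝ) (t₁ t₂ M : ℝ → ℝ) : Prop :=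
  ∀ γ ∈ Ioo 0 (gammaMax q),
    M γ = ∫ t in (t₁ γ)..(t₂ γ), 1 / (t * Real.sqrt (f q γ t))

namespace Mlim

lemma sqrt_four : Real.sqrt 4 = 2 := by
  rw [show (4:ℝ) = 2^2 by norm_num, Real.sqrt_sq (by norm_num)]

lemma one_sub_u_sq {a b t : ℝ} (hab : a < b) (ht : t ≠ 0) :
    1 - (((a+b)*t - 2*(a*b))/((b-a)*t))^2 = 4*((a*b)*((t-a)*(b-t)))/((b-a)*t)^2 := by
  have h1 : (b-a)*t ≠ 0 := mul_ne_zero (sub_ne_zero.2 hab.ne') ht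
  rw [div_pow, one_sub_div (pow_ne_zero 2 h1)]
  congr 1
  ring

lemma u_hasDerivAt {a b t : ℝ} (hab : a < b) (ht : t ≠ 0) :
    HasDerivAt (fun t => ((a+b)*t - 2*(a*b))/((b-a)*t)) (2*(a*b)/((b-a)*t^2)) t := by
  have h1 : HasDerivAt (fun t : ℝ => (a+b)*t - 2*(a*b)) (a+b) t := by
    simpa using ((hasDerivAt_id t).const_mul (a+b)).sub_const (2*(a*b))
  have h2 : HasDerivAt (fun t : ℝ => (b-a)*t) (b-a) t := by
    simpa using (hasDerivAt_id t).const_mul (b-a)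
  have hne : (b-a)*t ≠ 0 := mul_ne_zero (sub_ne_zero.2 hab.ne') ht
  have := h1.div h2 hne
  refine this.congr_deriv ?_
  rw [div_eq_div_iff (pow_ne_zero 2 hne) (mul_ne_zero (sub_ne_zero.2 hab.ne') (pow_ne_zero 2 ht))]
  ring

lemma model_hasDerivAt {a b t : ℝ} (ha : 0 < a) (hab : a < b) (ht : t ∈ Ioo a b) :
    HasDerivAt (fun s => (Real.sqrt (a*b))⁻¹ * Real.arcsin (((a+b)*s - 2*(a*b))/((b-a)*s)))
      (1 / (t * Real.sqrt ((t-a)*(b-t)))) t := by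
  have ht0 : 0 < t := ha.trans ht.1
  have hw : 0 < (t-a)*(b-t) := mul_pos (sub_pos.2 ht.1) (sub_pos.2 ht.2)
  have hab0 : 0 < a*b := mul_pos ha (ha.trans hab)
  have hba : 0 < b - a := sub_pos.2 hab
  set u := ((a+b)*t - 2*(a*b))/((b-a)*t) with hu
  have hsq : 1 - u^2 = 4*((a*b)*((t-a)*(b-t)))/((b-a)*t)^2 :=
    one_sub_u_sq hab ht0.ne'
  have husq : 0 < 1 - u^2 := by
    rw [hsq]; positivity
  have hune : u ≠ -1 ∧ u ≠ 1 := by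
    constructor <;> intro h <;> rw [h] at husq <;> norm_num at husq
  have harc := (Real.hasDerivAt_arcsin hune.1 hune.2).comp t (u_hasDerivAt hab ht0.ne')
  have := harc.const_mul (Real.sqrt (a*b))⁻¹
  refine this.congr_deriv (Eq.symm ?_)
  have hR : Real.sqrt (a*b) > 0 := Real.sqrt_pos.2 hab0
  have hS : Real.sqrt ((t-a)*(b-t)) > 0 := Real.sqrt_pos.2 hw
  have hsqrt : Real.sqrt (1 - u^2) = 2*(Real.sqrt (a*b) * Real.sqrt ((t-a)*(b-t)))/((b-a)*t) := by
    rw [hsq, Real.sqrt_div (by positivity), Real.sqrt_sq (by positivity),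
      show (4:ℝ)*((a*b)*((t-a)*(b-t))) = 4*(a*b*((t-a)*(b-t))) by ring,
      Real.sqrt_mul (by norm_num), sqrt_four, Real.sqrt_mul hab0.le]
  have hRR : Real.sqrt (a*b) * Real.sqrt (a*b) = a*b := Real.mul_self_sqrt hab0.le
  rw [hsqrt]
  rw [div_div_eq_mul_div, one_div, mul_inv]
  have key : ∀ R S : ℝ, 0 < R → 0 < S → R*R = a*b →
      t⁻¹ * S⁻¹ = R⁻¹ * (1*((b-a)*t)/(2*(R*S)) * (2*(a*b)/((b-a)*t^2))) := by
    intro R S hR hS hRR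
    have h1 : b - a ≠ 0 := sub_ne_zero.2 hab.ne'
    field_simp
    linear_combination hRR
  exact key _ _ hR hS hRR

end Mlim

namespace Mlim2
open Mlim

lemma rpow_neg_half {x : ℝ} (hx : 0 ≤ x) : x ^ (-(1/2) : ℝ) = (Real.sqrt x)⁻¹ := by
  rw [Real.rpow_neg hx, ← Real.sqrt_eq_rpow]

lemma model_meas {a b c d : ℝ} :
    AEStronglyMeasurable (fun t => 1/(t * Real.sqrt ((t-a)*(b-t))))
      (volume.restrict (Set.uIoc c d)) := by
  simp only [one_div]
  exact ((measurable_id.mul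
    (((measurable_id.sub measurable_const).mul
      (measurable_const.sub measurable_id)).sqrt)).inv).aestronglyMeasurable

lemma model_integrable {a b : ℝ} (ha : 0 < a) (hab : a < b) :
    IntervalIntegrable (fun t => 1/(t * Real.sqrt ((t-a)*(b-t)))) volume a b := by
  set m := (a+b)/2 with hm
  have ham : a < m := by rw [hm]; linarith
  have hmb : m < b := by rw [hm]; linarith
  have hba2 : (0:ℝ) < (b-a)/2 := by linarith
  set C : ℝ := (a * Real.sqrt ((b-a)/2))⁻¹ with hC
  have hCpos : 0 < C := by
    rw [hC]; exact inv_pos.2 (mul_pos ha (Real.sqrt_pos.2 hba2))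
  -- main comparison estimate, valid for t in Ioc a b
  have key : ∀ t, a < t → t ≤ b →
      ‖1/(t * Real.sqrt ((t-a)*(b-t)))‖
        ≤ C * ((if t ≤ m then (t-a) else (b-t)) ^ (-(1/2):ℝ)) := by
    intro t hat htb
    have ht0 : 0 < t := ha.trans hat
    have hta : 0 < t - a := sub_pos.2 hat
    have hbt : 0 ≤ b - t := sub_nonneg.2 htb
    have hnn : 0 ≤ 1/(t * Real.sqrt ((t-a)*(b-t))) := by positivity
    rw [Real.norm_eq_abs, abs_of_nonneg hnn]
    by_cases hcase : t ≤ m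
    · -- b - t ≥ (b-a)/2
      have h1 : (b-a)/2 ≤ b - t := by rw [hm] at hcase; linarith
      rw [if_pos hcase, rpow_neg_half hta.le, hC, one_div, ← mul_inv]
      apply inv_anti₀ (by positivity)
      calc a * Real.sqrt ((b-a)/2) * Real.sqrt (t-a)
          = a * Real.sqrt ((b-a)/2 * (t-a)) := by
            rw [mul_assoc, ← Real.sqrt_mul hba2.le]
        _ ≤ t * Real.sqrt ((t-a)*(b-t)) := by
            apply mul_le_mul hat.le (Real.sqrt_le_sqrt (by nlinarith)) (Real.sqrt_nonneg _) ht0.le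
    · push_neg at hcase
      have h1 : (b-a)/2 ≤ t - a := by rw [hm] at hcase; linarith
      rw [if_neg (not_le.2 hcase)]
      rcases eq_or_lt_of_le htb with rfl | htb'
      · simp [Real.zero_rpow (by norm_num : (-(1/2):ℝ) ≠ 0)]
      · have hbt' : 0 < b - t := sub_pos.2 htb'
        rw [rpow_neg_half hbt'.le, hC, one_div, ← mul_inv]
        apply inv_anti₀ (by positivity)
        calc a * Real.sqrt ((b-a)/2) * Real.sqrt (b-t)
            = a * Real.sqrt ((b-a)/2 * (b-t)) := by
              rw [mul_assoc, ← Real.sqrt_mul hba2.le]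
          _ ≤ t * Real.sqrt ((t-a)*(b-t)) := by
              exact mul_le_mul hat.le (Real.sqrt_le_sqrt (by nlinarith))
                (Real.sqrt_nonneg _) ht0.le
  -- first piece a..m
  have int1 : IntervalIntegrable (fun t => C * ((t-a) ^ (-(1/2):ℝ))) volume a m := by
    have h := ((intervalIntegral.intervalIntegrable_rpow' (a := 0) (b := m - a)
      (r := -(1/2)) (by norm_num)).comp_sub_right a).const_mul C
    rwa [zero_add, sub_add_cancel] at h
  have int2 : IntervalIntegrable (fun t => C * ((b-t) ^ (-(1/2):ℝ))) volume m b := by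
    have h := ((intervalIntegral.intervalIntegrable_rpow' (a := b - m) (b := 0)
      (r := -(1/2)) (by norm_num)).comp_sub_left b).const_mul C
    rwa [show b - (b-m) = m by ring, sub_zero] at h
  have p1 : IntervalIntegrable (fun t => 1/(t * Real.sqrt ((t-a)*(b-t)))) volume a m := by
    apply int1.mono_fun model_meas
    rw [uIoc_of_le ham.le]
    refine (ae_restrict_iff' measurableSet_Ioc).2 (ae_of_all _ fun t ht => ?_)
    have := key t ht.1 (ht.2.trans hmb.le)
    rw [if_pos ht.2] at this
    calc ‖1/(t * Real.sqrt ((t-a)*(b-t)))‖ ≤ C * ((t-a) ^ (-(1/2):ℝ)) := this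
      _ ≤ ‖C * ((t-a) ^ (-(1/2):ℝ))‖ := le_abs_self _
  have p2 : IntervalIntegrable (fun t => 1/(t * Real.sqrt ((t-a)*(b-t)))) volume m b := by
    apply int2.mono_fun model_meas
    rw [uIoc_of_le hmb.le]
    refine (ae_restrict_iff' measurableSet_Ioc).2 (ae_of_all _ fun t ht => ?_)
    have := key t (ham.trans ht.1) ht.2
    rw [if_neg (not_le.2 ht.1)] at this
    calc ‖1/(t * Real.sqrt ((t-a)*(b-t)))‖ ≤ C * ((b-t) ^ (-(1/2):ℝ)) := this
      _ ≤ ‖C * ((b-t) ^ (-(1/2):ℝ))‖ := le_abs_self _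
  exact p1.trans p2

end Mlim2

namespace Mlim3

lemma model_integral {a b : ℝ} (ha : 0 < a) (hab : a < b) :
    ∫ t in a..b, 1/(t * Real.sqrt ((t-a)*(b-t))) = π / Real.sqrt (a*b) := by
  have hab0 : 0 < a*b := mul_pos ha (ha.trans hab)
  have hR : 0 < Real.sqrt (a*b) := Real.sqrt_pos.2 hab0
  set F : ℝ → ℝ := fun s => (Real.sqrt (a*b))⁻¹ * Real.arcsin (((a+b)*s - 2*(a*b))/((b-a)*s))
    with hF
  have hderiv : ∀ t ∈ Ioo a b, HasDerivAt F (1 / (t * Real.sqrt ((t-a)*(b-t)))) t :=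
    fun t htt => Mlim.model_hasDerivAt ha hab htt
  have hcont : ∀ x : ℝ, x ≠ 0 → ContinuousAt F x := by
    intro x hx
    have hne : (b-a)*x ≠ 0 := mul_ne_zero (sub_ne_zero.2 hab.ne') hx
    apply ContinuousAt.mul continuousAt_const
    exact Real.continuous_arcsin.continuousAt.comp <|
      ContinuousAt.div (by fun_prop) (by fun_prop) hne
  have hneA : (b-a)*a ≠ 0 := ne_of_gt (mul_pos (sub_pos.2 hab) ha)
  have hneB : (b-a)*b ≠ 0 := ne_of_gt (mul_pos (sub_pos.2 hab) (ha.trans hab))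
  have huA : ((a+b)*a - 2*(a*b))/((b-a)*a) = -1 := by
    rw [div_eq_iff hneA]; ring
  have huB : ((a+b)*b - 2*(a*b))/((b-a)*b) = 1 := by
    rw [div_eq_iff hneB]; ring
  have hFa : F a = (Real.sqrt (a*b))⁻¹ * (-(π/2)) := by
    rw [hF]; simp only; rw [huA, Real.arcsin_neg_one]
  have hFb : F b = (Real.sqrt (a*b))⁻¹ * (π/2) := by
    rw [hF]; simp only; rw [huB, Real.arcsin_one]
  have hTa : Tendsto F (nhdsWithin a (Ioi a)) (nhds ((Real.sqrt (a*b))⁻¹ * (-(π/2)))) := by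
    rw [← hFa]; exact ((hcont a ha.ne').tendsto).mono_left nhdsWithin_le_nhds
  have hTb : Tendsto F (nhdsWithin b (Iio b)) (nhds ((Real.sqrt (a*b))⁻¹ * (π/2))) := by
    rw [← hFb]; exact ((hcont b (ha.trans hab).ne').tendsto).mono_left nhdsWithin_le_nhds
  rw [intervalIntegral.integral_eq_sub_of_hasDerivAt_of_tendsto hab hderiv
    (Mlim2.model_integrable ha hab) hTa hTb]
  field_simp
  ring

lemma model_integral_K {K a b : ℝ} (hK : 0 < K) (ha : 0 < a) (hab : a < b) :
    ∫ t in a..b, 1/(t * Real.sqrt (K * ((t-a)*(b-t)))) = π / Real.sqrt (K * (a*b)) := by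
  have hKs : 0 < Real.sqrt K := Real.sqrt_pos.2 hK
  have hfun : ∀ t : ℝ, 1/(t * Real.sqrt (K * ((t-a)*(b-t))))
      = (Real.sqrt K)⁻¹ * (1/(t * Real.sqrt ((t-a)*(b-t)))) := by
    intro t
    rw [Real.sqrt_mul hK.le, one_div, one_div, mul_inv, mul_inv, mul_inv]
    ring
  simp only [hfun]
  rw [intervalIntegral.integral_const_mul, model_integral ha hab, Real.sqrt_mul hK.le]
  field_simp

end Mlim3

namespace Main

def T (q : ℝ) : ℝ := 1 + 2/q

def cc (q γ s : ℝ) : ℝ := γ * ((q/2+1) * (q/2)) * s^(q/2-1) / 2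

variable {q : ℝ}

lemma hT1 (hq : 2 < q) : 1 < T q := by
  have : 0 < 2/q := by positivity
  unfold T; linarith

lemma hT0 (hq : 2 < q) : 0 < T q := lt_trans one_pos (hT1 hq)

lemma gammaMax_pos (hq : 2 < q) : 0 < gammaMax q := by
  unfold gammaMax
  have h1 : 0 < 2/(q+2) := by positivity
  have h2 : 0 < (1 + 2/q) ^ (-(q/2)) := Real.rpow_pos_of_pos (hT0 hq) _
  exact mul_pos h1 h2

lemma f_continuous (γ : ℝ) (hq : 2 < q) : Continuous (f q γ) := by
  rw [continuous_iff_continuousAt]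
  intro x
  unfold f
  apply ContinuousAt.sub _ continuousAt_const
  apply ContinuousAt.sub continuousAt_id
  apply ContinuousAt.mul continuousAt_const
  rcases eq_or_ne x 0 with rfl | hx
  · exact Real.continuousAt_rpow_const 0 _ (Or.inr (by linarith))
  · exact Real.continuousAt_rpow_const x _ (Or.inl hx)

lemma f_hasDerivAt (γ x : ℝ) (hx : x ≠ 0) :
    HasDerivAt (f q γ) (1 - γ*((q/2+1) * x^(q/2))) x := by
  unfold f
  have h1 : HasDerivAt (fun t : ℝ => t ^ (q/2+1)) ((q/2+1) * x^(q/2)) x := by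
    have := Real.hasDerivAt_rpow_const (x := x) (p := q/2+1) (Or.inl hx)
    simpa using this
  simpa using ((hasDerivAt_id x).sub ((h1.const_mul γ))).sub_const 1

lemma gm_mul (hq : 2 < q) : gammaMax q * (q/2+1) = (T q)^(-(q/2)) := by
  unfold gammaMax T
  have h : (2/(q+2)) * (q/2+1) = 1 := by
    field_simp
  calc 2/(q+2) * (1+2/q)^(-(q/2)) * (q/2+1)
      = (2/(q+2) * (q/2+1)) * (1+2/q)^(-(q/2)) := by ring
    _ = (1+2/q)^(-(q/2)) := by rw [h, one_mul]

lemma gm_T_pow (hq : 2 < q) : gammaMax q * (T q)^(q/2+1) = 2/q := by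
  unfold gammaMax
  have hT : 0 < T q := hT0 hq
  have : (1 + 2/q) ^ (-(q/2)) * (1 + 2/q) ^ (q/2+1) = T q := by
    rw [← Real.rpow_add (show (0:ℝ) < 1 + 2/q from hT)]
    rw [show -(q/2) + (q/2+1) = 1 by ring, Real.rpow_one]
    rfl
  calc 2/(q+2) * (1+2/q)^(-(q/2)) * (T q)^(q/2+1)
      = 2/(q+2) * ((1+2/q)^(-(q/2)) * (1+2/q)^(q/2+1)) := by unfold T; ring
    _ = 2/(q+2) * T q := by rw [this]
    _ = 2/q := by
        unfold T
        have hq0 : q ≠ 0 := by linarith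
        have hq2 : q + 2 ≠ 0 := by linarith
        field_simp

lemma fmax_T (hq : 2 < q) : f q (gammaMax q) (T q) = 0 := by
  unfold f
  rw [gm_T_pow hq]
  unfold T
  field_simp
  ring


lemma rpow_cancel (hq : 2 < q) : (T q)^(-(q/2)) * (T q)^(q/2) = 1 := by
  rw [← Real.rpow_add (hT0 hq), show -(q/2) + q/2 = 0 by ring, Real.rpow_zero]

lemma deriv_pos_lt (hq : 2 < q) {x : ℝ} (hx : 0 < x) (hxT : x < T q) :
    0 < 1 - gammaMax q*((q/2+1) * x^(q/2)) := by
  have h1 : gammaMax q * ((q/2+1) * x^(q/2)) = (T q)^(-(q/2)) * x^(q/2) := by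
    rw [← mul_assoc, gm_mul hq]
  have h2 : x^(q/2) < (T q)^(q/2) := Real.rpow_lt_rpow hx.le hxT (by linarith)
  have h3 : (0:ℝ) < (T q)^(-(q/2)) := Real.rpow_pos_of_pos (hT0 hq) _
  nlinarith [rpow_cancel hq]

lemma deriv_neg_gt (hq : 2 < q) {x : ℝ} (hxT : T q < x) :
    1 - gammaMax q*((q/2+1) * x^(q/2)) < 0 := by
  have h1 : gammaMax q * ((q/2+1) * x^(q/2)) = (T q)^(-(q/2)) * x^(q/2) := by
    rw [← mul_assoc, gm_mul hq]
  have h2 : (T q)^(q/2) < x^(q/2) := Real.rpow_lt_rpow (hT0 hq).le hxT (by linarith)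
  have h3 : (0:ℝ) < (T q)^(-(q/2)) := Real.rpow_pos_of_pos (hT0 hq) _
  nlinarith [rpow_cancel hq]

lemma fmax_neg (hq : 2 < q) {s : ℝ} (hs : 0 < s) (hsT : s ≠ T q) :
    f q (gammaMax q) s < 0 := by
  rcases lt_or_gt_of_ne hsT with h | h
  · have mono : StrictMonoOn (f q (gammaMax q)) (Icc s (T q)) := by
      apply strictMonoOn_of_deriv_pos (convex_Icc _ _) ((f_continuous _ hq).continuousOn)
      intro x hx
      rw [interior_Icc] at hx
      rw [(f_hasDerivAt (gammaMax q) x (ne_of_gt (hs.trans hx.1))).deriv]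
      exact deriv_pos_lt hq (hs.trans hx.1) hx.2
    have := mono (left_mem_Icc.2 h.le) (right_mem_Icc.2 h.le) h
    rwa [fmax_T hq] at this
  · have anti : StrictAntiOn (f q (gammaMax q)) (Icc (T q) s) := by
      apply strictAntiOn_of_deriv_neg (convex_Icc _ _) ((f_continuous _ hq).continuousOn)
      intro x hx
      rw [interior_Icc] at hx
      rw [(f_hasDerivAt (gammaMax q) x (ne_of_gt ((hT0 hq).trans hx.1))).deriv]
      exact deriv_neg_gt hq hx.1
    have := anti (left_mem_Icc.2 h.le) (right_mem_Icc.2 h.le) h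
    rwa [fmax_T hq] at this

lemma f_sub (γ γ' s : ℝ) : f q γ s - f q γ' s = (γ' - γ) * s^(q/2+1) := by
  unfold f; ring


lemma pos_between (hq : 2 < q) {γ A B s : ℝ} (hγ : 0 < γ) (hA : 0 < A) (hAB : A < B)
    (hfA : f q γ A = 0) (hfB : f q γ B = 0)
    (huniq : ∀ t, 0 < t → f q γ t = 0 → t = A ∨ t = B)
    (hs : 0 < s) (hfs : 0 < f q γ s) : A < s ∧ s < B := by
  constructor
  · by_contra hcon
    push_neg at hcon
    have hsA : s < A := by
      rcases eq_or_lt_of_le hcon with heq | h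
      · rw [heq, hfA] at hfs; exact absurd hfs (lt_irrefl 0)
      · exact h
    set s' := min s 1 / 2 with hs'
    have hs'pos : 0 < s' := by
      rw [hs']; positivity
    have hs's : s' < s := by
      rw [hs']
      have : min s 1 ≤ s := min_le_left _ _
      linarith
    have hs'1 : s' < 1 := by
      rw [hs']
      have : min s 1 ≤ 1 := min_le_right _ _
      linarith
    have hneg : f q γ s' < 0 := by
      unfold f
      have : 0 ≤ γ * s' ^ (q/2+1) := by positivity
      linarith
    obtain ⟨r, hr, hr0⟩ := intermediate_value_Ioo hs's.le
      ((f_continuous γ hq).continuousOn) (show (0:ℝ) ∈ Ioo (f q γ s') (f q γ s) from ⟨hneg, hfs⟩)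
    rcases huniq r (hs'pos.trans hr.1) hr0 with rfl | rfl
    · linarith [hr.2]
    · linarith [hr.2]
  · by_contra hcon
    push_neg at hcon
    have hBs : B < s := by
      rcases eq_or_lt_of_le hcon with heq | h
      · rw [← heq, hfB] at hfs; exact absurd hfs (lt_irrefl 0)
      · exact h
    set S := max s (1/γ) + 1 with hS
    have hsS : s < S := by
      rw [hS]; have := le_max_left s (1/γ); linarith
    have hS1 : 1 < S := by
      rw [hS]; have := le_max_right s (1/γ); have : 0 < 1/γ := by positivity
      have := le_max_right s (1/γ); linarith
    have hS0 : 0 < S := lt_trans one_pos hS1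
    have hgS : 1 < S * γ := by
      have h1γ : 1/γ < S := by
        rw [hS]; have := le_max_right s (1/γ); linarith
      exact (div_lt_iff₀ hγ).mp h1γ
    have hSp : S^(2:ℝ) ≤ S^(q/2+1) :=
      Real.rpow_le_rpow_of_exponent_le hS1.le (by linarith)
    have hS2 : S^(2:ℝ) = S * S := by
      rw [show (2:ℝ) = ((2:ℕ):ℝ) by norm_num, Real.rpow_natCast]
      ring
    have hfS : f q γ S < 0 := by
      unfold f
      have h1 : γ * S^(2:ℝ) ≤ γ * S^(q/2+1) := mul_le_mul_of_nonneg_left hSp hγ.le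
      rw [hS2] at h1
      have h2 : S < γ * (S * S) := by
        have := mul_lt_mul_of_pos_right hgS hS0
        rw [one_mul] at this
        calc S < S * γ * S := this
          _ = γ * (S * S) := by ring
      set X := S ^ (q/2+1) with hX
      linarith
    obtain ⟨r, hr, hr0⟩ := intermediate_value_Ioo' hsS.le
      ((f_continuous γ hq).continuousOn) (show (0:ℝ) ∈ Ioo (f q γ S) (f q γ s) from ⟨hfS, hfs⟩)
    rcases huniq r (hs.trans hr.1) hr0 with rfl | rfl
    · linarith [hr.1]
    · linarith [hr.1]

lemma nonpos_of_convexOn {A B : ℝ} (hAB : A ≤ B) {h : ℝ → ℝ}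
    (hc : ConvexOn ℝ (Icc A B) h) (hA : h A ≤ 0) (hB : h B ≤ 0) :
    ∀ t ∈ Icc A B, h t ≤ 0 := by
  intro t htI
  rw [← segment_eq_Icc hAB] at htI
  obtain ⟨σ, τ, hσ, hτ, hστ, rfl⟩ := htI
  have := hc.2 (left_mem_Icc.2 hAB) (right_mem_Icc.2 hAB) hσ hτ hστ
  have h1 : σ * h A ≤ 0 := mul_nonpos_of_nonneg_of_nonpos hσ hA
  have h2 : τ * h B ≤ 0 := mul_nonpos_of_nonneg_of_nonpos hτ hB
  simp only [smul_eq_mul] at this ⊢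
  linarith


lemma quad_hasDerivAt (A B c t : ℝ) :
    HasDerivAt (fun t => c * ((t - A)*(B - t))) (c * (A + B - 2*t)) t := by
  have h1 : HasDerivAt (fun t : ℝ => (t - A)*(B - t)) (1 * (B - t) + (t - A) * (0 - 1)) t :=
    (((hasDerivAt_id t).sub_const A)).mul ((hasDerivAt_const t B).sub (hasDerivAt_id t))
  have := h1.const_mul c
  refine this.congr_deriv ?_
  ring

lemma fp_hasDerivAt (γ t : ℝ) (ht : t ≠ 0) :
    HasDerivAt (fun x : ℝ => 1 - γ*((q/2+1) * x^(q/2)))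
      (-(γ*((q/2+1)*((q/2) * t^(q/2-1))))) t := by
  have h1 : HasDerivAt (fun x : ℝ => x ^ (q/2)) ((q/2) * t^(q/2-1)) t :=
    Real.hasDerivAt_rpow_const (Or.inl ht)
  have := (hasDerivAt_const t (1:ℝ)).sub ((h1.const_mul (q/2+1)).const_mul γ)
  refine this.congr_deriv ?_
  ring

lemma sandwich (hq : 2 < q) {γ A B : ℝ} (hγ : 0 < γ) (hA : 0 < A) (hAB : A < B)
    (hfA : f q γ A = 0) (hfB : f q γ B = 0) :
    ∀ t ∈ Icc A B, cc q γ A * ((t - A)*(B - t)) ≤ f q γ t ∧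
        f q γ t ≤ cc q γ B * ((t - A)*(B - t)) := by
  have hK : (0:ℝ) < (q/2+1) * (q/2) := by nlinarith
  have he : (0:ℝ) ≤ q/2 - 1 := by linarith
  have hquadcont : ∀ c : ℝ, Continuous (fun t : ℝ => c * ((t - A)*(B - t))) := by
    intro c; fun_prop
  have upper : ∀ t ∈ Icc A B, f q γ t ≤ cc q γ B * ((t - A)*(B - t)) := by
    set c := cc q γ B with hc
    have hconv : ConvexOn ℝ (Icc A B) (fun t => f q γ t - c * ((t - A)*(B - t))) := by
      apply convexOn_of_hasDerivWithinAt2_nonneg (convex_Icc A B)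
        (f' := fun t => (1 - γ*((q/2+1) * t^(q/2))) - c * (A + B - 2*t))
        (f'' := fun t => -(γ*((q/2+1)*((q/2) * t^(q/2-1)))) + c * 2)
      · exact ((f_continuous γ hq).sub (hquadcont c)).continuousOn
      · intro x hx
        rw [interior_Icc] at hx
        exact ((f_hasDerivAt γ x (ne_of_gt (hA.trans hx.1))).sub
          (quad_hasDerivAt A B c x)).hasDerivWithinAt
      · intro x hx
        rw [interior_Icc] at hx
        have hd2 : HasDerivAt (fun t : ℝ => c * (A + B - 2*t)) (c * (-2)) x := by
          have : HasDerivAt (fun t : ℝ => A + B - 2*t) (0 - 2*1) x :=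
            (hasDerivAt_const x (A+B)).sub ((hasDerivAt_id x).const_mul 2)
          have := this.const_mul c
          refine this.congr_deriv ?_
          ring
        have := (fp_hasDerivAt (q := q) γ x (ne_of_gt (hA.trans hx.1))).sub hd2
        rw [interior_Icc]
        refine this.hasDerivWithinAt.congr_deriv ?_
        ring
      · intro x hx
        rw [interior_Icc] at hx
        have hx0 : 0 < x := hA.trans hx.1
        have hxe : x^(q/2-1) ≤ B^(q/2-1) := Real.rpow_le_rpow hx0.le hx.2.le he
        have hmul := mul_le_mul_of_nonneg_left hxe (mul_pos hγ hK).le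
        rw [hc]; unfold cc
        nlinarith [hmul]
    have h0A : f q γ A - c * ((A - A)*(B - A)) ≤ 0 := by rw [hfA]; ring_nf; simp
    have h0B : f q γ B - c * ((B - A)*(B - B)) ≤ 0 := by rw [hfB]; ring_nf; simp
    intro t htI
    have := nonpos_of_convexOn hAB.le hconv h0A h0B t htI
    linarith
  have lower : ∀ t ∈ Icc A B, cc q γ A * ((t - A)*(B - t)) ≤ f q γ t := by
    set c := cc q γ A with hc
    have hconv : ConvexOn ℝ (Icc A B) (fun t => c * ((t - A)*(B - t)) - f q γ t) := by
      apply convexOn_of_hasDerivWithinAt2_nonneg (convex_Icc A B)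
        (f' := fun t => c * (A + B - 2*t) - (1 - γ*((q/2+1) * t^(q/2))))
        (f'' := fun t => c * (-2) + γ*((q/2+1)*((q/2) * t^(q/2-1))))
      · exact ((hquadcont c).sub (f_continuous γ hq)).continuousOn
      · intro x hx
        rw [interior_Icc] at hx
        exact ((quad_hasDerivAt A B c x).sub
          (f_hasDerivAt γ x (ne_of_gt (hA.trans hx.1)))).hasDerivWithinAt
      · intro x hx
        rw [interior_Icc] at hx
        have hd2 : HasDerivAt (fun t : ℝ => c * (A + B - 2*t)) (c * (-2)) x := by
          have : HasDerivAt (fun t : ℝ => A + B - 2*t) (0 - 2*1) x :=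
            (hasDerivAt_const x (A+B)).sub ((hasDerivAt_id x).const_mul 2)
          have := this.const_mul c
          refine this.congr_deriv ?_
          ring
        have := hd2.sub (fp_hasDerivAt (q := q) γ x (ne_of_gt (hA.trans hx.1)))
        rw [interior_Icc]
        refine this.hasDerivWithinAt.congr_deriv ?_
        ring
      · intro x hx
        rw [interior_Icc] at hx
        have hx0 : 0 < x := hA.trans hx.1
        have hxe : A^(q/2-1) ≤ x^(q/2-1) := Real.rpow_le_rpow hA.le hx.1.le he
        have hmul := mul_le_mul_of_nonneg_left hxe (mul_pos hγ hK).le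
        rw [hc]; unfold cc
        nlinarith [hmul]
    have h0A : c * ((A - A)*(B - A)) - f q γ A ≤ 0 := by rw [hfA]; ring_nf; simp
    have h0B : c * ((B - A)*(B - B)) - f q γ B ≤ 0 := by rw [hfB]; ring_nf; simp
    intro t htI
    have := nonpos_of_convexOn hAB.le hconv h0A h0B t htI
    linarith
  exact fun t htI => ⟨lower t htI, upper t htI⟩


lemma cc_pos (hq : 2 < q) {γ s : ℝ} (hγ : 0 < γ) (hs : 0 < s) : 0 < cc q γ s := by
  unfold cc
  have h1 : 0 < s^(q/2-1) := Real.rpow_pos_of_pos hs _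
  have hK : (0:ℝ) < (q/2+1) * (q/2) := by nlinarith
  positivity

lemma sqrt_factor (K a b t : ℝ) (hK : 0 ≤ K) :
    1/(t * Real.sqrt (K * ((t-a)*(b-t))))
      = (Real.sqrt K)⁻¹ * (1/(t * Real.sqrt ((t-a)*(b-t)))) := by
  rw [Real.sqrt_mul hK, one_div, one_div, mul_inv, mul_inv, mul_inv]
  ring

lemma model_integrable_K {K a b : ℝ} (hK : 0 < K) (ha : 0 < a) (hab : a < b) :
    IntervalIntegrable (fun t => 1/(t * Real.sqrt (K * ((t-a)*(b-t))))) volume a b := by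
  simp only [sqrt_factor K a b _ hK.le]
  exact (Mlim2.model_integrable ha hab).const_mul _

lemma mid_meas {q γ : ℝ} (hq : 2 < q) {c d : ℝ} :
    AEStronglyMeasurable (fun t => 1/(t * Real.sqrt (f q γ t)))
      (volume.restrict (Set.uIoc c d)) := by
  simp only [one_div]
  exact ((measurable_id.mul
    ((f_continuous γ hq).measurable.sqrt)).inv).aestronglyMeasurable

lemma M_bounds (hq : 2 < q) {γ A B : ℝ} (hγ : 0 < γ) (hA : 0 < A) (hAB : A < B)
    (hfA : f q γ A = 0) (hfB : f q γ B = 0) :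
    π / Real.sqrt (cc q γ B * (A*B)) ≤ (∫ t in A..B, 1 / (t * Real.sqrt (f q γ t))) ∧
    (∫ t in A..B, 1 / (t * Real.sqrt (f q γ t))) ≤ π / Real.sqrt (cc q γ A * (A*B)) := by
  have hc1 : 0 < cc q γ A := cc_pos hq hγ hA
  have hc2 : 0 < cc q γ B := cc_pos hq hγ (hA.trans hAB)
  have hpt : ∀ t ∈ Icc A B,
      1/(t * Real.sqrt (cc q γ B * ((t-A)*(B-t)))) ≤ 1/(t * Real.sqrt (f q γ t)) ∧
      1/(t * Real.sqrt (f q γ t)) ≤ 1/(t * Real.sqrt (cc q γ A * ((t-A)*(B-t)))) := by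
    intro t htI
    obtain ⟨hlo, hhi⟩ := sandwich hq hγ hA hAB hfA hfB t htI
    have ht0 : 0 < t := lt_of_lt_of_le hA htI.1
    have hw : 0 ≤ (t-A)*(B-t) := mul_nonneg (sub_nonneg.2 htI.1) (sub_nonneg.2 htI.2)
    rcases eq_or_lt_of_le hw with heq | hw'
    · rw [← heq] at hlo hhi
      rw [mul_zero] at hlo hhi
      have hf0 : f q γ t = 0 := le_antisymm hhi hlo
      rw [hf0, ← heq, mul_zero, mul_zero, Real.sqrt_zero, mul_zero, div_zero]
      norm_num
    · have hfpos : 0 < f q γ t := lt_of_lt_of_le (mul_pos hc1 hw') hlo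
      constructor
      · apply one_div_le_one_div_of_le (by positivity)
        exact mul_le_mul_of_nonneg_left (Real.sqrt_le_sqrt hhi) ht0.le
      · apply one_div_le_one_div_of_le
        · have : 0 < cc q γ A * ((t-A)*(B-t)) := mul_pos hc1 hw'
          positivity
        · exact mul_le_mul_of_nonneg_left (Real.sqrt_le_sqrt hlo) ht0.le
  have hi1 : IntervalIntegrable (fun t => 1/(t * Real.sqrt (cc q γ A * ((t-A)*(B-t)))))
      volume A B := model_integrable_K hc1 hA hAB
  have hi2 : IntervalIntegrable (fun t => 1/(t * Real.sqrt (cc q γ B * ((t-A)*(B-t)))))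
      volume A B := model_integrable_K hc2 hA hAB
  have him : IntervalIntegrable (fun t => 1/(t * Real.sqrt (f q γ t))) volume A B := by
    apply hi1.mono_fun (mid_meas hq)
    rw [uIoc_of_le hAB.le]
    refine (ae_restrict_iff' measurableSet_Ioc).2 (ae_of_all _ fun t htI => ?_)
    have htI' : t ∈ Icc A B := Ioc_subset_Icc_self htI
    have ht0 : 0 < t := lt_of_lt_of_le hA htI'.1
    have hnn : 0 ≤ 1/(t * Real.sqrt (f q γ t)) := by positivity
    have hnn' : 0 ≤ 1/(t * Real.sqrt (cc q γ A * ((t-A)*(B-t)))) := by positivity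
    simp only [Real.norm_eq_abs]
    rw [abs_of_nonneg hnn, abs_of_nonneg hnn']
    exact (hpt t htI').2
  constructor
  · calc π / Real.sqrt (cc q γ B * (A*B))
        = ∫ t in A..B, 1/(t * Real.sqrt (cc q γ B * ((t-A)*(B-t)))) :=
          (Mlim3.model_integral_K hc2 hA hAB).symm
      _ ≤ _ := intervalIntegral.integral_mono_on hAB.le hi2 him (fun t htI => (hpt t htI).1)
  · calc (∫ t in A..B, 1 / (t * Real.sqrt (f q γ t)))
        ≤ ∫ t in A..B, 1/(t * Real.sqrt (cc q γ A * ((t-A)*(B-t)))) :=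
          intervalIntegral.integral_mono_on hAB.le him hi1 (fun t htI => (hpt t htI).2)
      _ = π / Real.sqrt (cc q γ A * (A*B)) := Mlim3.model_integral_K hc1 hA hAB

end Main

/-- For `q > 2`, `M_q(γ) → 2π/√(q+2)` as `γ → γ_max⁻`. -/
theorem M_limit (q : ℝ) (hq : 2 < q) (t₁ t₂ M : ℝ → ℝ)
    (ht : AreRoots q t₁ t₂) (hM : IsM q t₁ t₂ M) :
    Tendsto M (nhdsWithin (gammaMax q) (Iio (gammaMax q)))
      (nhds (2 * π / Real.sqrt (q + 2))) := by
  set gm := gammaMax q with hgmdef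
  have hgm : 0 < gm := Main.gammaMax_pos hq
  set l := nhdsWithin gm (Iio gm) with hl
  have hmem : Ioo 0 gm ∈ l := Ioo_mem_nhdsLT_of_mem ⟨hgm, le_refl gm⟩
  have hT0 := Main.hT0 hq
  have straddle : ∀ γ ∈ Ioo 0 gm, t₁ γ < Main.T q ∧ Main.T q < t₂ γ := by
    intro γ hγ
    obtain ⟨h1, h12, hf1, hf2, huniq⟩ := ht γ hγ
    have hfT : 0 < f q γ (Main.T q) := by
      have hsub : f q γ (Main.T q) - f q gm (Main.T q) = (gm - γ) * (Main.T q)^(q/2+1) :=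
        Main.f_sub γ gm (Main.T q)
      have hz : f q gm (Main.T q) = 0 := Main.fmax_T hq
      have hp : 0 < (Main.T q)^(q/2+1) := Real.rpow_pos_of_pos hT0 _
      have := mul_pos (sub_pos.2 hγ.2) hp
      linarith
    exact Main.pos_between hq hγ.1 h1 h12 hf1 hf2 huniq hT0 hfT
  have evneg : ∀ s : ℝ, 0 < s → s ≠ Main.T q → ∀ᶠ γ in l, f q γ s < 0 := by
    intro s hs hsT
    have hneg : f q gm s < 0 := Main.fmax_neg hq hs hsT
    have hp : 0 < s^(q/2+1) := Real.rpow_pos_of_pos hs _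
    set δ := (-(f q gm s)) / s^(q/2+1) with hδ
    have hδpos : 0 < δ := by rw [hδ]; apply div_pos (by linarith) hp
    have hev : Ioo (gm - δ) gm ∈ l := Ioo_mem_nhdsLT_of_mem ⟨by linarith, le_refl gm⟩
    filter_upwards [hev] with γ hγδ
    have hsub : f q γ s - f q gm s = (gm - γ) * s^(q/2+1) := Main.f_sub γ gm s
    have h1 : (gm - γ) < δ := by linarith [hγδ.1]
    have h2 : (gm - γ) * s^(q/2+1) < δ * s^(q/2+1) := by
      exact mul_lt_mul_of_pos_right h1 hp
    have h3 : δ * s^(q/2+1) = -(f q gm s) := by rw [hδ]; field_simp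
    linarith
  have ht2 : Tendsto t₂ l (nhds (Main.T q)) := by
    rw [tendsto_order]
    constructor
    · intro a' ha'
      filter_upwards [hmem] with γ hγ
      exact ha'.trans (straddle γ hγ).2
    · intro b' hb'
      have hb'0 : 0 < b' := hT0.trans hb'
      filter_upwards [hmem, evneg b' hb'0 (ne_of_gt hb')] with γ hγ hnegb
      obtain ⟨h1, h12, hf1, hf2, huniq⟩ := ht γ hγ
      by_contra hcon
      push_neg at hcon
      rcases eq_or_lt_of_le hcon with heq | hlt
      · rw [← heq] at hf2
        linarith
      · have hstr := straddle γ hγ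
        have hbI : b' ∈ Icc (t₁ γ) (t₂ γ) := ⟨le_of_lt (hstr.1.trans hb'), hlt.le⟩
        have hsand := (Main.sandwich hq hγ.1 h1 h12 hf1 hf2 b' hbI).1
        have hwpos : 0 < (b' - t₁ γ)*(t₂ γ - b') :=
          mul_pos (by linarith [hstr.1]) (by linarith)
        have hcpos := Main.cc_pos hq hγ.1 h1
        nlinarith
  have ht1 : Tendsto t₁ l (nhds (Main.T q)) := by
    rw [tendsto_order]
    constructor
    · intro a' ha'
      rcases le_or_gt a' 0 with h0 | h0
      · filter_upwards [hmem] with γ hγ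
        exact lt_of_le_of_lt h0 (ht γ hγ).1
      · filter_upwards [hmem, evneg a' h0 (ne_of_lt ha')] with γ hγ hnega
        obtain ⟨h1, h12, hf1, hf2, huniq⟩ := ht γ hγ
        by_contra hcon
        push_neg at hcon
        rcases eq_or_lt_of_le hcon with heq | hlt
        · rw [heq] at hf1
          linarith
        · have hstr := straddle γ hγ
          have haI : a' ∈ Icc (t₁ γ) (t₂ γ) := ⟨hlt.le, le_of_lt (ha'.trans hstr.2)⟩
          have hsand := (Main.sandwich hq hγ.1 h1 h12 hf1 hf2 a' haI).1
          have hwpos : 0 < (a' - t₁ γ)*(t₂ γ - a') :=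
            mul_pos (by linarith) (by linarith [hstr.2])
          have hcpos := Main.cc_pos hq hγ.1 h1
          nlinarith
    · intro b' hb'
      filter_upwards [hmem] with γ hγ
      exact (straddle γ hγ).1.trans hb'
  have hMb : ∀ᶠ γ in l,
      π / Real.sqrt (Main.cc q γ (t₂ γ) * (t₁ γ * t₂ γ)) ≤ M γ ∧
      M γ ≤ π / Real.sqrt (Main.cc q γ (t₁ γ) * (t₁ γ * t₂ γ)) := by
    filter_upwards [hmem] with γ hγ
    obtain ⟨h1, h12, hf1, hf2, huniq⟩ := ht γ hγ
    have hb := Main.M_bounds hq hγ.1 h1 h12 hf1 hf2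
    rw [hM γ hγ]
    exact hb
  have hγten : Tendsto (fun γ : ℝ => γ) l (nhds gm) := tendsto_id.mono_left nhdsWithin_le_nhds
  have hrpow : ContinuousAt (fun x : ℝ => x ^ (q/2-1)) (Main.T q) :=
    Real.continuousAt_rpow_const _ _ (Or.inl (ne_of_gt hT0))
  have hcc : ∀ tt : ℝ → ℝ, Tendsto tt l (nhds (Main.T q)) →
      Tendsto (fun γ => Main.cc q γ (tt γ)) l (nhds (Main.cc q gm (Main.T q))) := by
    intro tt htt
    unfold Main.cc
    exact ((hγten.mul_const ((q/2+1)*(q/2))).mul (hrpow.tendsto.comp htt)).div_const 2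
  have hTpow : (Main.T q)^(-(q/2)) * (Main.T q)^(q/2-1) = (Main.T q)⁻¹ := by
    rw [← Real.rpow_add hT0, show -(q/2) + (q/2-1) = -1 by ring, Real.rpow_neg_one]
  have e1 : Main.cc q gm (Main.T q) = (2/(q+2)) * (Main.T q)⁻¹ * ((q/2+1)*(q/2)) / 2 := by
    unfold Main.cc
    rw [hgmdef]
    unfold gammaMax
    rw [show (1 + 2/q : ℝ) = Main.T q from rfl]
    calc 2/(q+2) * (Main.T q)^(-(q/2)) * ((q/2+1)*(q/2)) * (Main.T q)^(q/2-1) / 2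
        = 2/(q+2) * ((Main.T q)^(-(q/2)) * (Main.T q)^(q/2-1)) * ((q/2+1)*(q/2)) / 2 := by ring
      _ = (2/(q+2)) * (Main.T q)⁻¹ * ((q/2+1)*(q/2)) / 2 := by rw [hTpow]
  have hlimval : Main.cc q gm (Main.T q) * (Main.T q * Main.T q) = (q+2)/4 := by
    rw [e1]
    unfold Main.T
    have hq0 : q ≠ 0 := by linarith
    have hq2 : q + 2 ≠ 0 := by linarith
    have hT0' : (1:ℝ) + 2/q ≠ 0 := by
      have := Main.hT0 hq
      unfold Main.T at this
      linarith
    field_simp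
    ring
  have hsq : Real.sqrt ((q+2)/4) = Real.sqrt (q+2) / 2 := by
    rw [Real.sqrt_div (by linarith) 4, Mlim.sqrt_four]
  have hsqpos : 0 < Real.sqrt (q+2) := Real.sqrt_pos.2 (by linarith)
  have hvne : Real.sqrt ((q+2)/4) ≠ 0 := by rw [hsq]; positivity
  have hval : π / Real.sqrt ((q+2)/4) = 2*π/Real.sqrt (q+2) := by
    rw [hsq]
    field_simp
  have hlimit : ∀ tt : ℝ → ℝ, Tendsto tt l (nhds (Main.T q)) →
      Tendsto (fun γ => π / Real.sqrt (Main.cc q γ (tt γ) * (t₁ γ * t₂ γ))) l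
        (nhds (2*π/Real.sqrt (q+2))) := by
    intro tt htt
    rw [← hval]
    apply Filter.Tendsto.div tendsto_const_nhds _ hvne
    rw [← hlimval]
    exact (Real.continuous_sqrt.continuousAt.tendsto).comp ((hcc tt htt).mul (ht1.mul ht2))
  exact tendsto_of_tendsto_of_tendsto_of_le_of_le' (hlimit t₂ ht2) (hlimit t₁ ht1)
    (hMb.mono fun γ h => h.1) (hMb.mono fun γ h => h.2)
end
end

section
/- Let q > 2, a ≠ 0, λ ∈ ℝ, and let r : ℝ → (0,∞) be a twice continuously differentiable 2π-periodic non-constant function satisfying −r''(x) + a²/r(x)³ = λ·r(x)^{q−1} for all x and ∫₀^{2π} r(x)^q dx = 2π. Then λ > a². -/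
open Real Set Filter MeasureTheory

noncomputable section


theorem bern_aux (q t : ℝ) (hq : 2 < q) (ht : 0 < t) : 1 - (2/q)*(t^q - 1) ≤ 1 / t^2 := by
  have hq2 : (0:ℝ) < q + 2 := by linarith
  have hq0 : (0:ℝ) < q := by linarith
  set w₁ := q/(q+2) with hw₁
  set w₂ := 2/(q+2) with hw₂
  have hw : w₁ + w₂ = 1 := by rw [hw₁, hw₂, ← add_div, div_self hq2.ne']
  have key := Real.geom_mean_le_arith_mean2_weighted
    (by positivity : (0:ℝ) ≤ w₁) (by positivity : (0:ℝ) ≤ w₂)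
    (by positivity : (0:ℝ) ≤ t ^ (-2:ℝ)) (by positivity : (0:ℝ) ≤ t ^ q) hw
  have h1 : (t ^ (-2:ℝ)) ^ w₁ * (t ^ q) ^ w₂ = 1 := by
    rw [← Real.rpow_mul ht.le, ← Real.rpow_mul ht.le, ← Real.rpow_add ht]
    rw [show (-2:ℝ) * w₁ + q * w₂ = 0 by rw [hw₁, hw₂]; field_simp; ring, Real.rpow_zero]
  rw [h1] at key
  have h2 : t ^ (-2:ℝ) = 1 / t^2 := by
    rw [Real.rpow_neg ht.le, show ((2:ℝ) = ((2:ℕ):ℝ)) by norm_num, Real.rpow_natCast]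
    simp
  rw [h2, hw₁, hw₂, div_mul_eq_mul_div, div_mul_eq_mul_div, ← add_div,
    le_div_iff₀ hq2] at key
  have h3 : (2/q)*(t^q - 1) = (2*(t^q-1))/q := by ring
  rw [h3, sub_le_iff_le_add, ← sub_le_iff_le_add', le_div_iff₀ hq0]
  nlinarith [key]

/-- If `r > 0` is a non-constant `C²` `2π`-periodic solution of `-r'' + a²/r³ = λ·r^{q-1}`
with `∫₀^{2π} r^q = 2π` and `a ≠ 0`, then `λ > a²`. -/
theorem lambda_gt_a_sq (q a lam : ℝ) (hq : 2 < q) (ha : a ≠ 0) (r : ℝ → ℝ)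
    (hsmooth : ContDiff ℝ 2 r) (hpos : ∀ x, 0 < r x)
    (hper : Function.Periodic r (2 * π))
    (hnonconst : ∃ x y, r x ≠ r y)
    (hode : ∀ x, -(deriv (deriv r) x) + a ^ 2 / r x ^ 3 = lam * r x ^ (q - 1))
    (hnorm : (∫ x in (0:ℝ)..(2 * π), r x ^ q) = 2 * π) :
    a ^ 2 < lam := by
  have hT : (0:ℝ) < 2 * π := by positivity
  -- regularity
  have h2 : ContDiff ℝ ((1:WithTop ℕ∞)+1) r := by
    have : ((1:WithTop ℕ∞)+1) = 2 := by norm_num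
    rw [this]; exact hsmooth
  have h2' := contDiff_succ_iff_deriv.mp h2
  have hdiff : Differentiable ℝ r := h2'.1
  have h1' := contDiff_one_iff_deriv.mp h2'.2.2
  have hdiff2 : Differentiable ℝ (deriv r) := h1'.1
  have hc0 : Continuous r := hsmooth.continuous
  have hc1 : Continuous (deriv r) := hdiff2.continuous
  have hc2 : Continuous (deriv (deriv r)) := h1'.2
  -- periodicity of deriv
  have hperd : Function.Periodic (deriv r) (2 * π) := by
    intro x
    have h1 : (fun y => r (y + 2 * π)) = r := funext hper
    rw [← deriv_comp_add_const, h1]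
  have hper0 : r (2 * π) = r 0 := by simpa using hper 0
  have hperd0 : deriv r (2 * π) = deriv r 0 := by simpa using hperd 0
  -- integration by parts
  have hibp : (∫ x in (0:ℝ)..(2*π),
      (deriv (deriv r) x * r x + deriv r x * deriv r x)) = 0 := by
    have h := intervalIntegral.integral_eq_sub_of_hasDerivAt
      (f := fun x => deriv r x * r x)
      (f' := fun x => deriv (deriv r) x * r x + deriv r x * deriv r x)
      (fun x _ => ((hdiff2 x).hasDerivAt.mul (hdiff x).hasDerivAt))
      (((hc2.mul hc0).add (hc1.mul hc1)).intervalIntegrable 0 (2*π))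
    rw [h]; rw [hperd0, hper0, sub_self]
  -- pointwise identity
  have hiden : ∀ x, lam * r x ^ q
      = -(deriv (deriv r) x * r x) + a ^ 2 / r x ^ 2 := by
    intro x
    have hr : r x ≠ 0 := (hpos x).ne'
    have hdd : deriv (deriv r) x = a ^ 2 / r x ^ 3 - lam * r x ^ (q-1) := by
      linarith [hode x]
    have hq' : r x ^ q = r x ^ (q - 1) * r x := by
      have := Real.rpow_add_one hr (q - 1)
      rwa [sub_add_cancel] at this
    rw [hdd, hq']
    field_simp
    ring
  -- continuity of integrands
  have hcq : Continuous (fun x => r x ^ q) :=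
    hc0.rpow_const (fun x => Or.inl (hpos x).ne')
  have hcinv : Continuous (fun x => a ^ 2 / r x ^ 2) :=
    continuous_const.div (hc0.pow 2) (fun x => pow_ne_zero 2 (hpos x).ne')
  have hcd2 : Continuous (fun x => deriv r x * deriv r x) := hc1.mul hc1
  have hcrr : Continuous (fun x => deriv (deriv r) x * r x) := hc2.mul hc0
  -- key integral identity
  have key : lam * (2 * π)
      = (∫ x in (0:ℝ)..(2*π), deriv r x * deriv r x)
        + ∫ x in (0:ℝ)..(2*π), a ^ 2 / r x ^ 2 := by
    have e1 : (∫ x in (0:ℝ)..(2*π), lam * r x ^ q) = lam * (2 * π) := by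
      rw [intervalIntegral.integral_const_mul, hnorm]
    have e2 : (∫ x in (0:ℝ)..(2*π), lam * r x ^ q)
        = ∫ x in (0:ℝ)..(2*π), (-(deriv (deriv r) x * r x) + a ^ 2 / r x ^ 2) :=
      intervalIntegral.integral_congr (fun x _ => hiden x)
    rw [intervalIntegral.integral_add (f := fun x => -(deriv (deriv r) x * r x)) ((hcrr.neg).intervalIntegrable 0 (2*π))
        (hcinv.intervalIntegrable 0 (2*π)), intervalIntegral.integral_neg] at e2
    rw [intervalIntegral.integral_add (hcrr.intervalIntegrable 0 (2*π))
        (hcd2.intervalIntegrable 0 (2*π))] at hibp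
    linarith [e1, e2, hibp]
  -- lower bound for the 1/r^2 term
  have hmon : a ^ 2 * (2 * π) ≤ ∫ x in (0:ℝ)..(2*π), a ^ 2 / r x ^ 2 := by
    have hq0 : (0:ℝ) < q := by linarith
    have hlhs : (∫ x in (0:ℝ)..(2*π), (a ^ 2 * (1 + 2/q) - (2 * a ^ 2 / q) * r x ^ q))
        = a ^ 2 * (2 * π) := by
      rw [intervalIntegral.integral_sub (g := fun x => (2 * a ^ 2 / q) * r x ^ q) (continuous_const.intervalIntegrable 0 (2*π))
          ((continuous_const.mul hcq).intervalIntegrable 0 (2*π)),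
        intervalIntegral.integral_const, intervalIntegral.integral_const_mul, hnorm]
      simp only [smul_eq_mul, sub_zero]
      field_simp
      ring
    have hple : ∀ x ∈ Icc (0:ℝ) (2*π),
        a ^ 2 * (1 + 2/q) - (2 * a ^ 2 / q) * r x ^ q ≤ a ^ 2 / r x ^ 2 := by
      intro x _
      have hb := bern_aux q (r x) hq (hpos x)
      have ha2 : (0:ℝ) ≤ a ^ 2 := sq_nonneg a
      have h1 : a ^ 2 * (1 - (2/q)*(r x ^ q - 1)) ≤ a ^ 2 * (1 / r x ^ 2) :=
        mul_le_mul_of_nonneg_left hb ha2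
      have h2 : a ^ 2 * (1 / r x ^ 2) = a ^ 2 / r x ^ 2 := by ring
      have h3 : a ^ 2 * (1 - (2/q)*(r x ^ q - 1))
          = a ^ 2 * (1 + 2/q) - (2 * a ^ 2 / q) * r x ^ q := by ring
      linarith [h1]
    have := intervalIntegral.integral_mono_on (μ := volume) (f := fun x => a ^ 2 * (1 + 2/q) - (2 * a ^ 2 / q) * r x ^ q) hT.le
      (((continuous_const.sub (continuous_const.mul hcq))).intervalIntegrable 0 (2*π))
      (hcinv.intervalIntegrable 0 (2*π)) hple
    rw [hlhs] at this
    exact this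
  -- the derivative term is strictly positive
  have hx0 : ∃ x, deriv r x ≠ 0 := by
    by_contra h
    push_neg at h
    obtain ⟨x, y, hxy⟩ := hnonconst
    exact hxy (is_const_of_deriv_eq_zero hdiff h x y)
  obtain ⟨x₀, hx₀⟩ := hx0
  obtain ⟨y₀, hy₀, hy₀'⟩ := hperd.exists_mem_Ico₀ hT x₀
  have hposint : 0 < ∫ x in (0:ℝ)..(2*π), deriv r x * deriv r x := by
    refine intervalIntegral.integral_pos hT hcd2.continuousOn
      (fun x _ => mul_self_nonneg _) ⟨y₀, Ico_subset_Icc_self hy₀, ?_⟩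
    have : deriv r y₀ ≠ 0 := by rw [← hy₀']; exact hx₀
    exact mul_self_pos.mpr this
  nlinarith [key, hmon, hposint, hT]
end
end

section
/- Let q > 2 and 0 < γ < γ_max. Then f(t) = t − γ t^{q/2+1} − 1 has exactly two zeros t₁ < t₂ in (0,∞); both satisfy t₁ > 1; f > 0 on (t₁, t₂); f'(t₁) > 0 and f'(t₂) < 0; and f' has a unique positive zero t₀ = (2/(γ(q+2)))^{2/q}, which satisfies t₁ < t₀ < t₂. -/
open Real Set Filter MeasureTheory

noncomputable section

set_option maxHeartbeats 1000000 in
/-- For `q > 2` and `0 < γ < γ_max`: `f` has exactly two positive zeros `t₁ < t₂`, both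
`> 1`; `f > 0` on `(t₁, t₂)`; `f'(t₁) > 0`, `f'(t₂) < 0`; and `f'` has a unique positive
zero `t₀ = (2/(γ(q+2)))^{2/q}`, with `t₁ < t₀ < t₂`. -/
theorem roots_of_f (q γ : ℝ) (hq : 2 < q) (hγ : γ ∈ Ioo 0 (gammaMax q)) :
    ∃ t₁ t₂ : ℝ, 1 < t₁ ∧ t₁ < t₂ ∧ f q γ t₁ = 0 ∧ f q γ t₂ = 0 ∧
      (∀ t, 0 < t → f q γ t = 0 → t = t₁ ∨ t = t₂) ∧
      (∀ t ∈ Ioo t₁ t₂, 0 < f q γ t) ∧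
      0 < deriv (f q γ) t₁ ∧ deriv (f q γ) t₂ < 0 ∧
      deriv (f q γ) ((2 / (γ * (q + 2))) ^ (2 / q)) = 0 ∧
      (∀ t, 0 < t → deriv (f q γ) t = 0 → t = (2 / (γ * (q + 2))) ^ (2 / q)) ∧
      t₁ < (2 / (γ * (q + 2))) ^ (2 / q) ∧ (2 / (γ * (q + 2))) ^ (2 / q) < t₂ := by
  obtain ⟨hγ0, hγm⟩ := hγ
  have hq0 : (0:ℝ) < q := by linarith
  have hq2 : (0:ℝ) < q / 2 := by linarith
  have hqp : (0:ℝ) < q / 2 + 1 := by linarith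
  have hq2q : (0:ℝ) < 2 / q := by positivity
  set c : ℝ := 2 / (γ * (q + 2)) with hc
  have hcpos : 0 < c := by
    have : 0 < γ * (q + 2) := by positivity
    positivity
  set t₀ : ℝ := c ^ (2 / q) with ht₀def
  have ht₀pos : 0 < t₀ := Real.rpow_pos_of_pos hcpos _
  have hexp : q / 2 * (2 / q) = 1 := by field_simp
  have hexp' : 2 / q * (q / 2) = 1 := by field_simp
  have ht₀pow : t₀ ^ (q / 2) = c := by
    rw [ht₀def, ← Real.rpow_mul hcpos.le, hexp', Real.rpow_one]
  have key : γ * (q / 2 + 1) * t₀ ^ (q / 2) = 1 := by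
    rw [ht₀pow, hc]; field_simp
  -- derivative of f
  have hderiv : ∀ t : ℝ, 0 < t →
      HasDerivAt (f q γ) (1 - γ * (q / 2 + 1) * t ^ (q / 2)) t := by
    intro t ht
    have h := Real.hasDerivAt_rpow_const (x := t) (p := q / 2 + 1) (Or.inl ht.ne')
    rw [show q / 2 + 1 - 1 = q / 2 by ring] at h
    have h2 := ((hasDerivAt_id t).sub (h.const_mul γ)).sub_const 1
    have : (1 : ℝ) - γ * ((q / 2 + 1) * t ^ (q / 2)) = 1 - γ * (q / 2 + 1) * t ^ (q / 2) := by
      ring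
    rw [this] at h2
    exact h2
  have hderiv' : ∀ t : ℝ, 0 < t →
      deriv (f q γ) t = 1 - γ * (q / 2 + 1) * t ^ (q / 2) := fun t ht => (hderiv t ht).deriv
  have hct : ∀ t : ℝ, 0 < t → ContinuousAt (f q γ) t :=
    fun t ht => (hderiv t ht).continuousAt
  have ha : (0:ℝ) < γ * (q / 2 + 1) := mul_pos hγ0 hqp
  have hdpos : ∀ t : ℝ, 0 < t → t < t₀ → 0 < deriv (f q γ) t := by
    intro t ht htlt
    rw [hderiv' t ht]
    have h1 : t ^ (q / 2) < t₀ ^ (q / 2) := Real.rpow_lt_rpow ht.le htlt hq2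
    nlinarith [key]
  have hdneg : ∀ t : ℝ, t₀ < t → deriv (f q γ) t < 0 := by
    intro t htlt
    rw [hderiv' t (ht₀pos.trans htlt)]
    have h1 : t₀ ^ (q / 2) < t ^ (q / 2) := Real.rpow_lt_rpow ht₀pos.le htlt hq2
    nlinarith [key]
  have hmono : StrictMonoOn (f q γ) (Ioc 0 t₀) := by
    apply strictMonoOn_of_deriv_pos (convex_Ioc 0 t₀)
    · exact fun t ht => (hct t ht.1).continuousWithinAt
    · rw [interior_Ioc]; exact fun t ht => hdpos t ht.1 ht.2
  have hanti : StrictAntiOn (f q γ) (Ici t₀) := by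
    apply strictAntiOn_of_deriv_neg (convex_Ici t₀)
    · exact fun t ht => (hct t (lt_of_lt_of_le ht₀pos ht)).continuousWithinAt
    · rw [interior_Ici]; exact fun t ht => hdneg t ht
  -- f t₀ > 0
  have ht₀pow1 : t₀ ^ (q / 2 + 1) = t₀ * c := by
    rw [Real.rpow_add ht₀pos, Real.rpow_one, ht₀pow]; ring
  have hγq2 : γ * (q + 2) ≠ 0 := by positivity
  have hft₀ : f q γ t₀ = t₀ * (q / (q + 2)) - 1 := by
    simp only [f]
    rw [ht₀pow1, hc]
    field_simp
    ring
  have hb : (0:ℝ) < 1 + 2 / q := by positivity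
  have hB : (0:ℝ) < (1 + 2 / q) ^ (q / 2) := Real.rpow_pos_of_pos hb _
  have hcB : (1 + 2 / q) ^ (q / 2) < c := by
    rw [hc, lt_div_iff₀ (by positivity : (0:ℝ) < γ * (q + 2))]
    rw [gammaMax, Real.rpow_neg hb.le, ← div_eq_mul_inv] at hγm
    have h2 : γ * (1 + 2 / q) ^ (q / 2) < 2 / (q + 2) := (lt_div_iff₀ hB).mp hγm
    have h3 : γ * (1 + 2 / q) ^ (q / 2) * (q + 2) < 2 :=
      (lt_div_iff₀ (by linarith : (0:ℝ) < q + 2)).mp h2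
    nlinarith [h3]
  have ht₀gt : 1 + 2 / q < t₀ := by
    have h := Real.rpow_lt_rpow hB.le hcB hq2q
    rwa [← Real.rpow_mul hb.le, hexp, Real.rpow_one] at h
  have hft₀pos : 0 < f q γ t₀ := by
    rw [hft₀]
    have h1 : (1 + 2 / q) * (q / (q + 2)) = 1 := by field_simp
    have h2 : (0:ℝ) < q / (q + 2) := by positivity
    nlinarith [ht₀gt]
  have ht₀1 : 1 < t₀ := by linarith
  have hfneg : ∀ t : ℝ, 0 < t → t ≤ 1 → f q γ t < 0 := by
    intro t ht ht1
    have : 0 < γ * t ^ (q / 2 + 1) := mul_pos hγ0 (Real.rpow_pos_of_pos ht _)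
    simp only [f]; linarith
  -- t₁ via IVT on [1, t₀]
  have hcont1 : ContinuousOn (f q γ) (Icc 1 t₀) :=
    fun t ht => (hct t (lt_of_lt_of_le one_pos ht.1)).continuousWithinAt
  have hf1 : f q γ 1 < 0 := hfneg 1 one_pos le_rfl
  obtain ⟨t₁, ht₁mem, hft₁⟩ := intermediate_value_Ioo ht₀1.le hcont1
    (show (0:ℝ) ∈ Ioo (f q γ 1) (f q γ t₀) from ⟨hf1, hft₀pos⟩)
  -- T with f T < 0
  obtain ⟨T, hTt₀, hTbig⟩ : ∃ T : ℝ, t₀ < T ∧ (1 / γ) ^ (2 / q) < T :=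
    ⟨max t₀ ((1 / γ) ^ (2 / q)) + 1, (le_max_left _ _).trans_lt (lt_add_one _),
      (le_max_right _ _).trans_lt (lt_add_one _)⟩
  have hTpos : 0 < T := ht₀pos.trans hTt₀
  have hTγ : 1 < γ * T ^ (q / 2) := by
    have h1 : ((1 / γ) ^ (2 / q) : ℝ) ^ (q / 2) < T ^ (q / 2) :=
      Real.rpow_lt_rpow (Real.rpow_nonneg (by positivity) _) hTbig hq2
    rw [← Real.rpow_mul (by positivity : (0:ℝ) ≤ 1 / γ), hexp', Real.rpow_one] at h1
    rw [one_div] at h1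
    have h2 := mul_lt_mul_of_pos_left h1 hγ0
    rw [mul_inv_cancel₀ hγ0.ne'] at h2
    linarith
  have hfT : f q γ T < 0 := by
    simp only [f]
    have h1 : γ * T ^ (q / 2 + 1) = T * (γ * T ^ (q / 2)) := by
      rw [Real.rpow_add hTpos, Real.rpow_one]; ring
    nlinarith [hTγ, hTpos]
  have hcont2 : ContinuousOn (f q γ) (Icc t₀ T) :=
    fun t ht => (hct t (lt_of_lt_of_le ht₀pos ht.1)).continuousWithinAt
  obtain ⟨t₂, ht₂mem, hft₂⟩ := intermediate_value_Ioo' hTt₀.le hcont2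
    (show (0:ℝ) ∈ Ioo (f q γ T) (f q γ t₀) from ⟨hfT, hft₀pos⟩)
  have ht₁pos : 0 < t₁ := lt_trans one_pos ht₁mem.1
  have ht₁t₀ : t₁ < t₀ := ht₁mem.2
  have ht₀t₂ : t₀ < t₂ := ht₂mem.1
  refine ⟨t₁, t₂, ht₁mem.1, ht₁t₀.trans ht₀t₂, hft₁, hft₂, ?_, ?_, ?_, ?_, ?_, ?_, ht₁t₀, ht₀t₂⟩
  · -- uniqueness of zeros
    intro t ht hft
    rcases le_or_gt t t₀ with h | h
    · left
      exact hmono.injOn ⟨ht, h⟩ ⟨ht₁pos, ht₁t₀.le⟩ (by rw [hft, hft₁])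
    · right
      exact hanti.injOn (le_of_lt h) (le_of_lt ht₀t₂) (by rw [hft, hft₂])
  · -- positivity on (t₁, t₂)
    intro t ⟨h1, h2⟩
    rcases le_or_gt t t₀ with h | h
    · have := hmono ⟨ht₁pos, ht₁t₀.le⟩ ⟨ht₁pos.trans h1, h⟩ h1
      rw [hft₁] at this; exact this
    · have := hanti (le_of_lt h) (le_of_lt ht₀t₂) h2
      rw [hft₂] at this; exact this
  · exact hdpos t₁ ht₁pos ht₁t₀
  · exact hdneg t₂ ht₀t₂
  · rw [hderiv' t₀ ht₀pos]; linarith [key]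
  · intro t ht hdt
    rw [hderiv' t ht] at hdt
    have heq : t ^ (q / 2) = t₀ ^ (q / 2) := by
      have h1 : γ * (q / 2 + 1) * t ^ (q / 2) = γ * (q / 2 + 1) * t₀ ^ (q / 2) := by
        rw [key]; linarith
      exact mul_left_cancel₀ ha.ne' h1
    have h2 : (t ^ (q / 2)) ^ (2 / q) = (t₀ ^ (q / 2)) ^ (2 / q) := by rw [heq]
    rwa [← Real.rpow_mul ht.le, ← Real.rpow_mul ht₀pos.le, hexp, Real.rpow_one,
      Real.rpow_one] at h2
end
end

section
/- Let q > 2, and for γ ∈ (0, γ_max) let t₁(γ) < t₂(γ) denote the two positive zeros of f. Then t₁(γ) → (q+2)/q from below and t₂(γ) → (q+2)/q from above as γ → γ_max⁻. -/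
open Real Set Filter MeasureTheory

noncomputable section

section Aux

variable {q : ℝ}

lemma hT_eq (hq : 2 < q) : (1 : ℝ) + 2 / q = (q + 2) / q := by
  have hq0 : q ≠ 0 := by linarith
  field_simp

lemma hT_pos (hq : 2 < q) : 0 < (q + 2) / q := by
  have hq0 : (0:ℝ) < q := by linarith
  positivity

lemma hT_one (hq : 2 < q) : 1 < (q + 2) / q := by
  have hq0 : (0:ℝ) < q := by linarith
  rw [lt_div_iff₀ hq0]; linarith

lemma gammaMax_pos (hq : 2 < q) : 0 < gammaMax q := by
  have hq0 : (0:ℝ) < q := by linarith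
  have h1 : (0:ℝ) < 1 + 2 / q := by positivity
  unfold gammaMax
  positivity

lemma cT_eq (hq : 2 < q) : gammaMax q * ((q + 2) / q) ^ (q / 2 + 1) = 2 / q := by
  have hq0 : (0:ℝ) < q := by linarith
  have hq2 : (0:ℝ) < q + 2 := by linarith
  have hTpos := hT_pos hq
  unfold gammaMax
  rw [hT_eq hq, mul_assoc, ← Real.rpow_add hTpos]
  have h1 : -(q / 2) + (q / 2 + 1) = 1 := by ring
  rw [h1, Real.rpow_one]
  field_simp

lemma cp_eq (hq : 2 < q) : gammaMax q * (q / 2 + 1) = ((q + 2) / q) ^ (-(q / 2)) := by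
  have hq2 : (0:ℝ) < q + 2 := by linarith
  have h1 : 2 / (q + 2) * (q / 2 + 1) = 1 := by field_simp
  have h2 : gammaMax q * (q / 2 + 1)
      = (2 / (q + 2) * (q / 2 + 1)) * ((1 + 2 / q) ^ (-(q / 2))) := by
    unfold gammaMax; ring
  rw [h2, h1, one_mul, hT_eq hq]

lemma f_c_T (hq : 2 < q) : f q (gammaMax q) ((q + 2) / q) = 0 := by
  have hq0 : (0:ℝ) < q := by linarith
  unfold f
  rw [cT_eq hq]
  field_simp
  ring

lemma f_hasDeriv (hq : 2 < q) (γ : ℝ) {x : ℝ} (hx : 0 < x) :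
    HasDerivAt (f q γ) (1 - γ * ((q / 2 + 1) * x ^ (q / 2))) x := by
  have h1 : HasDerivAt (fun t : ℝ => t ^ (q / 2 + 1)) ((q / 2 + 1) * x ^ (q / 2 + 1 - 1)) x :=
    Real.hasDerivAt_rpow_const (Or.inl hx.ne')
  have he : q / 2 + 1 - 1 = q / 2 := by ring
  rw [he] at h1
  have := ((hasDerivAt_id x).sub (h1.const_mul γ)).sub_const 1
  exact this

lemma f_continuousOn (q γ : ℝ) {s : Set ℝ} (hs : ∀ x ∈ s, x ≠ 0) :
    ContinuousOn (f q γ) s := by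
  apply ContinuousOn.sub
  apply ContinuousOn.sub continuousOn_id
  · exact continuousOn_const.mul (fun x hx =>
      (Real.continuousAt_rpow_const x _ (Or.inl (hs x hx))).continuousWithinAt)
  · exact continuousOn_const

lemma f_neg (hq : 2 < q) {t : ℝ} (ht : 0 < t) (hne : t ≠ (q + 2) / q) :
    f q (gammaMax q) t < 0 := by
  have hq0 : (0:ℝ) < q := by linarith
  have hTpos := hT_pos hq
  set T := (q + 2) / q with hTdef
  set c := gammaMax q with hcdef
  have hsign : ∀ x : ℝ, 0 < x → c * ((q / 2 + 1) * x ^ (q / 2)) = (x / T) ^ (q / 2) := by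
    intro x hx
    rw [← mul_assoc, cp_eq hq, Real.div_rpow hx.le hTpos.le, Real.rpow_neg hTpos.le]
    ring
  rcases lt_or_gt_of_ne hne with h | h
  · have hmono : StrictMonoOn (f q c) (Icc t T) := by
      apply strictMonoOn_of_deriv_pos (convex_Icc t T)
      · exact f_continuousOn q c (fun x hx => (lt_of_lt_of_le ht hx.1).ne')
      · intro x hx
        rw [interior_Icc] at hx
        have hxpos : 0 < x := lt_trans ht hx.1
        rw [(f_hasDeriv hq c hxpos).deriv, hsign x hxpos]
        have h1 : x / T < 1 := (div_lt_one hTpos).2 hx.2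
        have h2 : (x / T) ^ (q / 2) < 1 :=
          Real.rpow_lt_one (by positivity) h1 (by positivity)
        linarith
    have := hmono ⟨le_refl t, le_of_lt h⟩ ⟨le_of_lt h, le_refl T⟩ h
    rw [f_c_T hq] at this
    exact this
  · have hanti : StrictAntiOn (f q c) (Icc T t) := by
      apply strictAntiOn_of_deriv_neg (convex_Icc T t)
      · exact f_continuousOn q c (fun x hx => (lt_of_lt_of_le hTpos hx.1).ne')
      · intro x hx
        rw [interior_Icc] at hx
        have hxpos : 0 < x := lt_trans hTpos hx.1
        rw [(f_hasDeriv hq c hxpos).deriv, hsign x hxpos]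
        have h1 : 1 < x / T := (one_lt_div hTpos).2 hx.1
        have h2 : 1 < (x / T) ^ (q / 2) :=
          Real.one_lt_rpow_iff_of_pos (by positivity) |>.2 (Or.inl ⟨h1, by positivity⟩)
        linarith
    have := hanti ⟨le_refl T, le_of_lt h⟩ ⟨le_of_lt h, le_refl t⟩ h
    rw [f_c_T hq] at this
    exact this

/-- The auxiliary function `g(t) = (t-1)/t^{q/2+1}`; a positive `t` is a root of
`f q γ` iff `g t = γ`. -/
def gfun (q : ℝ) (t : ℝ) : ℝ := (t - 1) / t ^ (q / 2 + 1)

lemma gfun_one : gfun q 1 = 0 := by simp [gfun]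

lemma gfun_eq_of_root {γ t : ℝ} (ht : 0 < t) (h : f q γ t = 0) : gfun q t = γ := by
  have hp : (0:ℝ) < t ^ (q / 2 + 1) := Real.rpow_pos_of_pos ht _
  have h' : t - γ * t ^ (q / 2 + 1) - 1 = 0 := h
  rw [gfun, div_eq_iff hp.ne']
  linarith

lemma gfun_lt (hq : 2 < q) {t : ℝ} (ht : 0 < t) (hne : t ≠ (q + 2) / q) :
    gfun q t < gammaMax q := by
  have h := f_neg hq ht hne
  have hp : (0:ℝ) < t ^ (q / 2 + 1) := Real.rpow_pos_of_pos ht _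
  have h' : t - gammaMax q * t ^ (q / 2 + 1) - 1 < 0 := h
  rw [gfun, div_lt_iff₀ hp]
  linarith

lemma gfun_continuousOn {s : Set ℝ} (hs : ∀ x ∈ s, (0:ℝ) < x) :
    ContinuousOn (gfun q) s := by
  apply ContinuousOn.div
  · exact (continuousOn_id).sub continuousOn_const
  · exact fun x hx =>
      (Real.continuousAt_rpow_const x _ (Or.inl (hs x hx).ne')).continuousWithinAt
  · exact fun x hx => (Real.rpow_pos_of_pos (hs x hx) _).ne'

lemma root_gt_one {γ t : ℝ} (hγ : 0 < γ) (ht : 0 < t)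
    (h : f q γ t = 0) : 1 < t := by
  by_contra hle
  push_neg at hle
  have hp : (0:ℝ) < t ^ (q / 2 + 1) := Real.rpow_pos_of_pos ht _
  have h' : t - γ * t ^ (q / 2 + 1) - 1 = 0 := h
  nlinarith

lemma root_pow_lt (hq : 2 < q) {γ t : ℝ} (hγ : 0 < γ) (ht : 0 < t)
    (h : f q γ t = 0) : t < (1 / γ) ^ (2 / q) := by
  have hq0 : (0:ℝ) < q := by linarith
  have h1 : 1 < t := root_gt_one hγ ht h
  have hsplit : t ^ (q / 2 + 1) = t ^ (q / 2) * t := by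
    rw [Real.rpow_add ht, Real.rpow_one]
  have h' : t - γ * (t ^ (q / 2) * t) - 1 = 0 := by
    have h0 : t - γ * t ^ (q / 2 + 1) - 1 = 0 := h
    rw [hsplit] at h0; exact h0
  have hlt : γ * t ^ (q / 2) < 1 := by
    have hp : (0:ℝ) < t ^ (q / 2) := Real.rpow_pos_of_pos ht _
    nlinarith
  have h2 : t ^ (q / 2) < 1 / γ := by
    rw [lt_div_iff₀ hγ]; linarith [mul_comm γ (t ^ (q/2))]
  calc t = (t ^ (q / 2)) ^ (2 / q) := by
        rw [← Real.rpow_mul ht.le]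
        rw [show q / 2 * (2 / q) = 1 by field_simp]
        exact (Real.rpow_one t).symm
    _ < (1 / γ) ^ (2 / q) :=
        Real.rpow_lt_rpow (Real.rpow_pos_of_pos ht _).le h2 (by positivity)

lemma f_neg_far (hq : 2 < q) {γ : ℝ} (hγ : 0 < γ) {t : ℝ}
    (ht : (1 / γ) ^ (2 / q) < t) : f q γ t < 0 := by
  have hq0 : (0:ℝ) < q := by linarith
  have hBpos : (0:ℝ) < (1 / γ) ^ (2 / q) := Real.rpow_pos_of_pos (by positivity) _
  have htpos : 0 < t := lt_trans hBpos ht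
  have h2 : 1 / γ < t ^ (q / 2) := by
    calc 1 / γ = ((1 / γ) ^ (2 / q)) ^ (q / 2) := by
          rw [← Real.rpow_mul (by positivity)]
          rw [show 2 / q * (q / 2) = 1 by field_simp]
          exact (Real.rpow_one _).symm
      _ < t ^ (q / 2) := Real.rpow_lt_rpow hBpos.le ht (by positivity)
  have h3 : 1 < γ * t ^ (q / 2) := by
    have := (div_lt_iff₀' hγ).1 h2
    linarith
  have hsplit : t ^ (q / 2 + 1) = t ^ (q / 2) * t := by
    rw [Real.rpow_add htpos, Real.rpow_one]
  unfold f
  rw [hsplit]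
  nlinarith

lemma f_gamma_T_pos (hq : 2 < q) {γ : ℝ} (hγ : γ < gammaMax q) :
    0 < f q γ ((q + 2) / q) := by
  have hTpos := hT_pos hq
  have hp : (0:ℝ) < ((q + 2) / q) ^ (q / 2 + 1) := Real.rpow_pos_of_pos hTpos _
  have h1 : f q γ ((q + 2) / q)
      = f q (gammaMax q) ((q + 2) / q) + (gammaMax q - γ) * ((q + 2) / q) ^ (q / 2 + 1) := by
    unfold f; ring
  rw [h1, f_c_T hq, zero_add]
  exact mul_pos (by linarith) hp

/-- The roots straddle `(q+2)/q`. -/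
lemma roots_between (hq : 2 < q) (t₁ t₂ : ℝ → ℝ) (ht : AreRoots q t₁ t₂)
    {γ : ℝ} (hγ : γ ∈ Ioo 0 (gammaMax q)) :
    t₁ γ < (q + 2) / q ∧ (q + 2) / q < t₂ γ := by
  obtain ⟨hp1, h12, hf1, hf2, huniq⟩ := ht γ hγ
  set T := (q + 2) / q with hTdef
  have hT1 : 1 < T := hT_one hq
  have hγ0 : 0 < γ := hγ.1
  have hfT : 0 < f q γ T := f_gamma_T_pos hq hγ.2
  have hf1neg : f q γ 1 < 0 := by
    unfold f; rw [Real.one_rpow]; linarith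
  -- a root in (1, T)
  have hcont1 : ContinuousOn (f q γ) (Icc 1 T) :=
    f_continuousOn q γ (fun x hx => by
      have : (0:ℝ) < x := lt_of_lt_of_le one_pos hx.1
      exact this.ne')
  obtain ⟨r₁, hr₁mem, hr₁⟩ : ∃ r ∈ Ioo (1:ℝ) T, f q γ r = 0 := by
    have hsub := intermediate_value_Ioo hT1.le hcont1
    have : (0:ℝ) ∈ Ioo (f q γ 1) (f q γ T) := ⟨hf1neg, hfT⟩
    obtain ⟨r, hr, hr0⟩ := hsub this
    exact ⟨r, hr, hr0⟩
  -- a root in (T, t₃)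
  set t₃ := (1 / γ) ^ (2 / q) + T with ht₃def
  have hBpos : (0:ℝ) < (1 / γ) ^ (2 / q) := Real.rpow_pos_of_pos (by positivity) _
  have hTt₃ : T < t₃ := by simp only [ht₃def]; linarith
  have hf3 : f q γ t₃ < 0 := f_neg_far hq hγ0 (by simp only [ht₃def]; linarith)
  have hcont2 : ContinuousOn (f q γ) (Icc T t₃) :=
    f_continuousOn q γ (fun x hx => by
      have : (0:ℝ) < x := lt_of_lt_of_le (hT_pos hq) hx.1
      exact this.ne')
  obtain ⟨r₂, hr₂mem, hr₂⟩ : ∃ r ∈ Ioo T t₃, f q γ r = 0 := by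
    have hsub := intermediate_value_Ioo' hTt₃.le hcont2
    have : (0:ℝ) ∈ Ioo (f q γ t₃) (f q γ T) := ⟨hf3, hfT⟩
    obtain ⟨r, hr, hr0⟩ := hsub this
    exact ⟨r, hr, hr0⟩
  have hr₁pos : 0 < r₁ := lt_trans one_pos hr₁mem.1
  have hr₂pos : 0 < r₂ := lt_trans (hT_pos hq) hr₂mem.1
  have hc₁ := huniq r₁ hr₁pos hr₁
  have hc₂ := huniq r₂ hr₂pos hr₂
  rcases hc₁ with h₁ | h₁ <;> rcases hc₂ with h₂ | h₂
  · exfalso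
    have hA : t₁ γ < T := h₁ ▸ hr₁mem.2
    have hB : T < t₁ γ := h₂ ▸ hr₂mem.1
    linarith
  · exact ⟨h₁ ▸ hr₁mem.2, h₂ ▸ hr₂mem.1⟩
  · exfalso
    have hA : t₂ γ < T := h₁ ▸ hr₁mem.2
    have hB : T < t₁ γ := h₂ ▸ hr₂mem.1
    linarith
  · exfalso
    have hA : t₂ γ < T := h₁ ▸ hr₁mem.2
    have hB : T < t₂ γ := h₂ ▸ hr₂mem.1
    linarith

end Aux

/-- For `q > 2`, the zeros `t₁(γ) < t₂(γ)` of `f` satisfy `t₁(γ) < (q+2)/q < t₂(γ)` on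
`(0, γ_max)`, and `t₁(γ) → (q+2)/q` from below, `t₂(γ) → (q+2)/q` from above, as
`γ → γ_max⁻`. -/
theorem roots_limit (q : ℝ) (hq : 2 < q) (t₁ t₂ : ℝ → ℝ) (ht : AreRoots q t₁ t₂) :
    (∀ γ ∈ Ioo 0 (gammaMax q), t₁ γ < (q + 2) / q ∧ (q + 2) / q < t₂ γ) ∧
    Tendsto t₁ (nhdsWithin (gammaMax q) (Iio (gammaMax q))) (nhds ((q + 2) / q)) ∧
    Tendsto t₂ (nhdsWithin (gammaMax q) (Iio (gammaMax q))) (nhds ((q + 2) / q)) := by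
  have hq0 : (0:ℝ) < q := by linarith
  set T := (q + 2) / q with hTdef
  set c := gammaMax q with hcdef
  have hT1 : 1 < T := hT_one hq
  have hTpos : 0 < T := hT_pos hq
  have hcpos : 0 < c := gammaMax_pos hq
  refine ⟨fun γ hγ => roots_between hq t₁ t₂ ht hγ, ?_, ?_⟩
  · -- limit of t₁
    rw [Metric.tendsto_nhds]
    intro ε hε
    set K := Icc (1:ℝ) (max 1 (T - ε)) with hKdef
    have hKne : K.Nonempty := ⟨1, le_refl 1, le_max_left _ _⟩
    have hKpos : ∀ x ∈ K, (0:ℝ) < x := fun x hx => lt_of_lt_of_le one_pos hx.1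
    obtain ⟨x₀, hx₀K, hmax⟩ :=
      isCompact_Icc.exists_isMaxOn hKne (gfun_continuousOn (q := q) hKpos)
    set m := gfun q x₀ with hmdef
    have hx₀T : x₀ < T := lt_of_le_of_lt hx₀K.2 (max_lt hT1 (by linarith))
    have hmlt : m < c := gfun_lt hq (hKpos x₀ hx₀K) hx₀T.ne
    have hm0 : 0 ≤ m := by
      have h1 : gfun q 1 ≤ gfun q x₀ := hmax ⟨le_refl 1, le_max_left _ _⟩
      rwa [gfun_one (q := q)] at h1
    filter_upwards [Ioo_mem_nhdsLT_of_mem (⟨hmlt, le_refl c⟩ : c ∈ Ioc m c)] with γ hγIoo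
    have hγmem : γ ∈ Ioo 0 c := ⟨lt_of_le_of_lt hm0 hγIoo.1, hγIoo.2⟩
    obtain ⟨hp1, h12, hf1, hf2, huniq⟩ := ht γ hγmem
    have ht₁T : t₁ γ < T := (roots_between hq t₁ t₂ ht hγmem).1
    have ht₁1 : 1 < t₁ γ := root_gt_one hγmem.1 hp1 hf1
    have hnotK : t₁ γ ∉ K := by
      intro hmem
      have h1 : gfun q (t₁ γ) ≤ m := hmax hmem
      have h2 : gfun q (t₁ γ) = γ := gfun_eq_of_root hp1 hf1
      rw [h2] at h1
      exact absurd hγIoo.1 (not_lt.2 h1)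
    have hgt : max 1 (T - ε) < t₁ γ := by
      by_contra hle
      push_neg at hle
      exact hnotK ⟨ht₁1.le, hle⟩
    have hgt' : T - ε < t₁ γ := lt_of_le_of_lt (le_max_right _ _) hgt
    rw [Real.dist_eq, abs_lt]
    constructor <;> linarith
  · -- limit of t₂
    rw [Metric.tendsto_nhds]
    intro ε hε
    set B := (1 / (c / 2)) ^ (2 / q) with hBdef
    set K := Icc (T + ε) (max (T + ε) B) with hKdef
    have hKne : K.Nonempty := ⟨T + ε, le_refl _, le_max_left _ _⟩
    have hKpos : ∀ x ∈ K, (0:ℝ) < x := fun x hx => lt_of_lt_of_le (by linarith) hx.1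
    obtain ⟨x₀, hx₀K, hmax⟩ :=
      isCompact_Icc.exists_isMaxOn hKne (gfun_continuousOn (q := q) hKpos)
    set m := gfun q x₀ with hmdef
    have hx₀T : T < x₀ := lt_of_lt_of_le (by linarith) hx₀K.1
    have hmlt : m < c := gfun_lt hq (hKpos x₀ hx₀K) hx₀T.ne'
    set m' := max m (c / 2) with hm'def
    have hm'lt : m' < c := max_lt hmlt (by linarith)
    filter_upwards [Ioo_mem_nhdsLT_of_mem (⟨hm'lt, le_refl c⟩ : c ∈ Ioc m' c)] with γ hγIoo
    have hγhalf : c / 2 < γ := lt_of_le_of_lt (le_max_right _ _) hγIoo.1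
    have hγm : m < γ := lt_of_le_of_lt (le_max_left _ _) hγIoo.1
    have hγmem : γ ∈ Ioo 0 c := ⟨by linarith, hγIoo.2⟩
    obtain ⟨hp1, h12, hf1, hf2, huniq⟩ := ht γ hγmem
    have hp2 : 0 < t₂ γ := lt_trans hp1 h12
    have ht₂T : T < t₂ γ := (roots_between hq t₁ t₂ ht hγmem).2
    have ht₂B : t₂ γ < B := by
      have h1 : t₂ γ < (1 / γ) ^ (2 / q) := root_pow_lt hq hγmem.1 hp2 hf2
      have h2 : (1 / γ) ^ (2 / q) ≤ B := by
        apply Real.rpow_le_rpow (div_nonneg one_pos.le hγmem.1.le) ?_ (by positivity)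
        apply div_le_div_of_nonneg_left one_pos.le (by linarith) hγhalf.le
      linarith
    have hnotK : t₂ γ ∉ K := by
      intro hmem
      have h1 : gfun q (t₂ γ) ≤ m := hmax hmem
      have h2 : gfun q (t₂ γ) = γ := gfun_eq_of_root hp2 hf2
      rw [h2] at h1
      linarith
    have hlt : t₂ γ < T + ε := by
      by_contra hle
      push_neg at hle
      exact hnotK ⟨hle, le_trans ht₂B.le (le_max_right _ _)⟩
    rw [Real.dist_eq, abs_lt]
    constructor <;> linarith
end
end

section
/- Let q > 2 and γ ∈ (0, γ_max), and set Ψ(t) = f'(t)² − 2f(t)f''(t). Then Ψ'(t) = −2f(t)f'''(t) for all t > 0, Ψ' > 0 on (t₁, t₂), and Ψ(t) > 0 for all t ∈ [t₁, t₂]. -/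
open Real Set Filter MeasureTheory

noncomputable section

/-- `f' `. -/
def f1 (q γ : ℝ) : ℝ → ℝ := deriv (f q γ)

/-- `f''`. -/
def f2 (q γ : ℝ) : ℝ → ℝ := deriv (f1 q γ)

/-- `f'''`. -/
def f3 (q γ : ℝ) : ℝ → ℝ := deriv (f2 q γ)

/-- `Ψ = f'² - 2ff''`. -/
def Psi (q γ : ℝ) : ℝ → ℝ := fun t => f1 q γ t ^ 2 - 2 * f q γ t * f2 q γ t

/-- `H_β = β(3f'²f'' + 2ff'f''' - 6ff''²) - q(q-2)t^{q/2-2}/2`. -/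
def Hb (q γ β : ℝ) : ℝ → ℝ := fun t =>
  β * (3 * f1 q γ t ^ 2 * f2 q γ t + 2 * f q γ t * f1 q γ t * f3 q γ t -
      6 * f q γ t * f2 q γ t ^ 2) -
    q * (q - 2) * t ^ (q / 2 - 2) / 2

/-- explicit first derivative -/
def g1 (q γ : ℝ) : ℝ → ℝ := fun t => 1 - γ * ((q / 2 + 1) * t ^ (q / 2))
def g2 (q γ : ℝ) : ℝ → ℝ := fun t => -(γ * ((q / 2 + 1) * (q / 2 * t ^ (q / 2 - 1))))
def g3 (q γ : ℝ) : ℝ → ℝ := fun t =>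
  -(γ * ((q / 2 + 1) * (q / 2 * ((q / 2 - 1) * t ^ (q / 2 - 2)))))

lemma hasDerivAt_f (q γ t : ℝ) (ht : 0 < t) : HasDerivAt (f q γ) (g1 q γ t) t := by
  have h := Real.hasDerivAt_rpow_const (x := t) (p := q / 2 + 1) (Or.inl ht.ne')
  have h2 : HasDerivAt (fun s : ℝ => s - γ * s ^ (q / 2 + 1) - 1)
      (1 - γ * ((q / 2 + 1) * t ^ (q / 2 + 1 - 1))) t :=
    ((hasDerivAt_id t).sub (h.const_mul γ)).sub_const 1
  have : q / 2 + 1 - 1 = q / 2 := by ring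
  rw [this] at h2
  exact h2

lemma f1_eq (q γ t : ℝ) (ht : 0 < t) : f1 q γ t = g1 q γ t :=
  (hasDerivAt_f q γ t ht).deriv

lemma hasDerivAt_g1 (q γ t : ℝ) (ht : 0 < t) : HasDerivAt (g1 q γ) (g2 q γ t) t := by
  have h := Real.hasDerivAt_rpow_const (x := t) (p := q / 2) (Or.inl ht.ne')
  have h2 : HasDerivAt (fun s : ℝ => 1 - γ * ((q / 2 + 1) * s ^ (q / 2)))
      (-(γ * ((q / 2 + 1) * (q / 2 * t ^ (q / 2 - 1))))) t :=
    ((h.const_mul (q / 2 + 1)).const_mul γ).const_sub 1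
  exact h2

lemma hasDerivAt_f1 (q γ t : ℝ) (ht : 0 < t) : HasDerivAt (f1 q γ) (g2 q γ t) t := by
  refine (hasDerivAt_g1 q γ t ht).congr_of_eventuallyEq ?_
  filter_upwards [Ioi_mem_nhds ht] with s hs
  exact f1_eq q γ s hs

lemma f2_eq (q γ t : ℝ) (ht : 0 < t) : f2 q γ t = g2 q γ t :=
  (hasDerivAt_f1 q γ t ht).deriv

lemma hasDerivAt_g2 (q γ t : ℝ) (ht : 0 < t) : HasDerivAt (g2 q γ) (g3 q γ t) t := by
  have h := Real.hasDerivAt_rpow_const (x := t) (p := q / 2 - 1) (Or.inl ht.ne')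
  have h2 : HasDerivAt (fun s : ℝ => -(γ * ((q / 2 + 1) * (q / 2 * s ^ (q / 2 - 1)))))
      (-(γ * ((q / 2 + 1) * (q / 2 * ((q / 2 - 1) * t ^ (q / 2 - 1 - 1)))))) t :=
    (((h.const_mul (q / 2)).const_mul (q / 2 + 1)).const_mul γ).neg
  have : q / 2 - 1 - 1 = q / 2 - 2 := by ring
  rw [this] at h2
  exact h2

lemma hasDerivAt_f2 (q γ t : ℝ) (ht : 0 < t) : HasDerivAt (f2 q γ) (g3 q γ t) t := by
  refine (hasDerivAt_g2 q γ t ht).congr_of_eventuallyEq ?_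
  filter_upwards [Ioi_mem_nhds ht] with s hs
  exact f2_eq q γ s hs

lemma f3_eq (q γ t : ℝ) (ht : 0 < t) : f3 q γ t = g3 q γ t :=
  (hasDerivAt_f2 q γ t ht).deriv

lemma hasDerivAt_Psi (q γ t : ℝ) (ht : 0 < t) :
    HasDerivAt (Psi q γ) (-2 * f q γ t * g3 q γ t) t := by
  have hP : HasDerivAt (fun s => g1 q γ s ^ 2 - 2 * (f q γ s * g2 q γ s))
      (-2 * f q γ t * g3 q γ t) t := by
    have h1 := (hasDerivAt_g1 q γ t ht).pow 2
    have h2 := (((hasDerivAt_f q γ t ht).mul (hasDerivAt_g2 q γ t ht)).const_mul 2)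
    have h3 : HasDerivAt (fun s => g1 q γ s ^ 2 - 2 * (f q γ s * g2 q γ s)) _ t := h1.sub h2
    convert h3 using 1
    push_cast
    ring
  refine hP.congr_of_eventuallyEq ?_
  filter_upwards [Ioi_mem_nhds ht] with s hs
  simp only [Psi, f1_eq q γ s hs, f2_eq q γ s hs]
  ring

/-- For `q > 2`, `γ ∈ (0, γ_max)`, and the two positive zeros `t₁ < t₂` of `f`:
`Ψ' = -2ff'''` on `(0,∞)`, `Ψ' > 0` on `(t₁, t₂)`, and `Ψ > 0` on `[t₁, t₂]`. -/
theorem Psi_pos (q γ : ℝ) (hq : 2 < q) (hγ : γ ∈ Ioo 0 (gammaMax q))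
    (t₁ t₂ : ℝ) (ht₁ : 0 < t₁) (h₁₂ : t₁ < t₂)
    (hz₁ : f q γ t₁ = 0) (hz₂ : f q γ t₂ = 0)
    (huniq : ∀ t, 0 < t → f q γ t = 0 → t = t₁ ∨ t = t₂) :
    (∀ t, 0 < t → deriv (Psi q γ) t = -2 * f q γ t * f3 q γ t) ∧
    (∀ t ∈ Ioo t₁ t₂, 0 < deriv (Psi q γ) t) ∧
    (∀ t ∈ Icc t₁ t₂, 0 < Psi q γ t) := by
  obtain ⟨hγ0, -⟩ := hγ
  have hq2 : (0:ℝ) < q / 2 := by linarith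
  have hq1 : (0:ℝ) < q / 2 - 1 := by linarith
  have hg3 : ∀ t : ℝ, 0 < t → g3 q γ t < 0 := by
    intro t ht
    have h := Real.rpow_pos_of_pos ht (q / 2 - 2)
    have hpos : 0 < γ * ((q / 2 + 1) * (q / 2 * ((q / 2 - 1) * t ^ (q / 2 - 2)))) := by
      positivity
    simp only [g3]
    linarith
  have hg1anti : ∀ a b : ℝ, 0 < a → a < b → g1 q γ b < g1 q γ a := by
    intro a b ha hab
    have h := Real.rpow_lt_rpow ha.le hab hq2
    have hc : (0:ℝ) < γ * (q / 2 + 1) := by positivity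
    simp only [g1]
    nlinarith [mul_lt_mul_of_pos_left h hc]
  have hcf : ∀ a b : ℝ, 0 < a → ContinuousOn (f q γ) (Icc a b) := fun a b ha s hs =>
    ((hasDerivAt_f q γ s (lt_of_lt_of_le ha hs.1)).continuousAt).continuousWithinAt
  have hfpos : ∀ t ∈ Ioo t₁ t₂, 0 < f q γ t := by
    intro t ht
    by_contra hle
    push_neg at hle
    have htpos : 0 < t := lt_trans ht₁ ht.1
    have hne : f q γ t ≠ 0 := by
      intro h0
      rcases huniq t htpos h0 with rfl | rfl
      · exact lt_irrefl _ ht.1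
      · exact lt_irrefl _ ht.2
    have hflt : f q γ t < 0 := lt_of_le_of_ne hle hne
    obtain ⟨c₁, hc₁, hc₁'⟩ := exists_hasDerivAt_eq_slope (f q γ) (g1 q γ) ht.1
      (hcf t₁ t ht₁) (fun x hx => hasDerivAt_f q γ x (lt_trans ht₁ hx.1))
    obtain ⟨c₂, hc₂, hc₂'⟩ := exists_hasDerivAt_eq_slope (f q γ) (g1 q γ) ht.2
      (hcf t t₂ htpos) (fun x hx => hasDerivAt_f q γ x (lt_trans htpos hx.1))
    have h1 : g1 q γ c₁ < 0 := by
      rw [hc₁', hz₁]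
      apply div_neg_of_neg_of_pos
      · linarith
      · linarith [ht.1]
    have h2 : 0 < g1 q γ c₂ := by
      rw [hc₂', hz₂]
      apply div_pos
      · linarith
      · linarith [ht.2]
    have := hg1anti c₁ c₂ (lt_trans ht₁ hc₁.1) (lt_trans hc₁.2 hc₂.1)
    linarith
  have hg1t₁ : 0 < g1 q γ t₁ := by
    obtain ⟨c, hc, hc'⟩ := exists_hasDerivAt_eq_slope (f q γ) (g1 q γ) h₁₂
      (hcf t₁ t₂ ht₁) (fun x hx => hasDerivAt_f q γ x (lt_trans ht₁ hx.1))
    rw [hz₁, hz₂] at hc'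
    simp only [sub_zero, zero_sub, neg_zero, zero_div] at hc'
    have := hg1anti t₁ c ht₁ hc.1
    linarith
  have hd : ∀ t, 0 < t → deriv (Psi q γ) t = -2 * f q γ t * f3 q γ t := by
    intro t ht
    rw [(hasDerivAt_Psi q γ t ht).deriv, f3_eq q γ t ht]
  refine ⟨hd, ?_, ?_⟩
  · intro t ht
    have htpos : 0 < t := lt_trans ht₁ ht.1
    rw [hd t htpos, f3_eq q γ t htpos]
    have h1 := hg3 t htpos
    have h2 := hfpos t ht
    nlinarith
  · intro t ht
    have hPt₁ : 0 < Psi q γ t₁ := by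
      have hE : Psi q γ t₁ = g1 q γ t₁ ^ 2 := by
        simp [Psi, f1_eq q γ t₁ ht₁, hz₁]
      rw [hE]
      positivity
    rcases ht.1.eq_or_lt with h | hlt
    · rw [← h]; exact hPt₁
    · have hcont : ContinuousOn (Psi q γ) (Icc t₁ t) := fun s hs =>
        ((hasDerivAt_Psi q γ s (lt_of_lt_of_le ht₁ hs.1)).continuousAt).continuousWithinAt
      obtain ⟨c, hc, hc'⟩ := exists_hasDerivAt_eq_slope (Psi q γ)
        (fun s => -2 * f q γ s * g3 q γ s) hlt hcont
        (fun x hx => hasDerivAt_Psi q γ x (lt_trans ht₁ hx.1))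
      have hcpos : 0 < f q γ c := hfpos c ⟨hc.1, lt_of_lt_of_le hc.2 ht.2⟩
      have hg3c := hg3 c (lt_trans ht₁ hc.1)
      have hslope : 0 < (Psi q γ t - Psi q γ t₁) / (t - t₁) := by
        rw [← hc']
        nlinarith
      have hnum : 0 < Psi q γ t - Psi q γ t₁ := by
        rw [div_pos_iff] at hslope
        rcases hslope with ⟨h1, _⟩ | ⟨_, h2⟩
        · exact h1
        · linarith
      linarith
end
end

section
/- Let q > 2 and γ > 0. Then for all t > 0, h''(t) = −γ·q·(q+1)·(q−2)·(q+2)·t^{q/2−2}·f(t). In particular, for γ ∈ (0, γ_max), h'' < 0 on (t₁, t₂), so h' is strictly decreasing on [t₁, t₂]. -/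
open Real Set Filter MeasureTheory

noncomputable section

/-- `h(t) = 4(q-2) - 4(q+1)t - 4γ(q+1)(q-2)t^{q/2+1} + 4γ(q+2)(q+1)t^{q/2}
    + γ²(q+2)(q-2)t^{q+1}`. -/
def h (q γ : ℝ) : ℝ → ℝ := fun t =>
  4 * (q - 2) - 4 * (q + 1) * t - 4 * γ * (q + 1) * (q - 2) * t ^ (q / 2 + 1) +
    4 * γ * (q + 2) * (q + 1) * t ^ (q / 2) + γ ^ 2 * (q + 2) * (q - 2) * t ^ (q + 1)

/-- Explicit formula for `h'`. -/
def h1 (q γ : ℝ) : ℝ → ℝ := fun t =>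
  -(4 * (q + 1)) - 4 * γ * (q + 1) * (q - 2) * (q / 2 + 1) * t ^ (q / 2) +
    4 * γ * (q + 2) * (q + 1) * (q / 2) * t ^ (q / 2 - 1) +
    γ ^ 2 * (q + 2) * (q - 2) * (q + 1) * t ^ q

private lemma rpow_hasDerivAt {p t : ℝ} (ht : 0 < t) :
    HasDerivAt (fun x : ℝ => x ^ p) (p * t ^ (p - 1)) t :=
  Real.hasDerivAt_rpow_const (Or.inl ht.ne')

private lemma hasDerivAt_h (q γ : ℝ) {t : ℝ} (ht : 0 < t) :
    HasDerivAt (h q γ) (h1 q γ t) t := by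
  have d1 := (rpow_hasDerivAt (p := q / 2 + 1) ht).const_mul (4 * γ * (q + 1) * (q - 2))
  have d2 := (rpow_hasDerivAt (p := q / 2) ht).const_mul (4 * γ * (q + 2) * (q + 1))
  have d3 := (rpow_hasDerivAt (p := q + 1) ht).const_mul (γ ^ 2 * (q + 2) * (q - 2))
  have dlin : HasDerivAt (fun x : ℝ => 4 * (q - 2) - 4 * (q + 1) * x) (-(4 * (q + 1))) t := by
    simpa using ((hasDerivAt_id t).const_mul (4 * (q + 1))).const_sub (4 * (q - 2))
  have H := ((dlin.sub d1).add d2).add d3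
  have e1 : q / 2 + 1 - 1 = q / 2 := by ring
  have e2 : q + 1 - 1 = q := by ring
  rw [e1, e2] at H
  have hv : h1 q γ t =
      -(4 * (q + 1)) - 4 * γ * (q + 1) * (q - 2) * ((q / 2 + 1) * t ^ (q / 2)) +
        4 * γ * (q + 2) * (q + 1) * (q / 2 * t ^ (q / 2 - 1)) +
        γ ^ 2 * (q + 2) * (q - 2) * ((q + 1) * t ^ q) := by
    simp only [h1]; ring
  rw [hv]; exact H

private lemma hasDerivAt_h1 (q γ : ℝ) {t : ℝ} (ht : 0 < t) :
    HasDerivAt (h1 q γ)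
      (-(4 * γ * (q + 1) * (q - 2) * (q / 2 + 1) * (q / 2)) * t ^ (q / 2 - 1) +
        4 * γ * (q + 2) * (q + 1) * (q / 2) * (q / 2 - 1) * t ^ (q / 2 - 2) +
        γ ^ 2 * (q + 2) * (q - 2) * (q + 1) * q * t ^ (q - 1)) t := by
  have d1 := (rpow_hasDerivAt (p := q / 2) ht).const_mul (4 * γ * (q + 1) * (q - 2) * (q / 2 + 1))
  have d2 := (rpow_hasDerivAt (p := q / 2 - 1) ht).const_mul (4 * γ * (q + 2) * (q + 1) * (q / 2))
  have d3 := (rpow_hasDerivAt (p := q) ht).const_mul (γ ^ 2 * (q + 2) * (q - 2) * (q + 1))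
  have H := (((hasDerivAt_const t (-(4 * (q + 1)))).sub d1).add d2).add d3
  have e1 : q / 2 - 1 - 1 = q / 2 - 2 := by ring
  rw [e1] at H
  have hv : -(4 * γ * (q + 1) * (q - 2) * (q / 2 + 1) * (q / 2)) * t ^ (q / 2 - 1) +
        4 * γ * (q + 2) * (q + 1) * (q / 2) * (q / 2 - 1) * t ^ (q / 2 - 2) +
        γ ^ 2 * (q + 2) * (q - 2) * (q + 1) * q * t ^ (q - 1) =
      0 - 4 * γ * (q + 1) * (q - 2) * (q / 2 + 1) * (q / 2 * t ^ (q / 2 - 1)) +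
        4 * γ * (q + 2) * (q + 1) * (q / 2) * ((q / 2 - 1) * t ^ (q / 2 - 2)) +
        γ ^ 2 * (q + 2) * (q - 2) * (q + 1) * (q * t ^ (q - 1)) := by ring
  rw [hv]; exact H

/-- For `q > 2` and `γ > 0`: `h''(t) = -γq(q+1)(q-2)(q+2)t^{q/2-2}f(t)` for all `t > 0`.
In particular, for `γ ∈ (0, γ_max)` and the two positive zeros `t₁ < t₂` of `f`,
`h'' < 0` on `(t₁, t₂)`, so `h'` is strictly decreasing on `[t₁, t₂]`. -/
theorem h_second_deriv (q γ : ℝ) (hq : 2 < q) (hγ : 0 < γ) :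
    (∀ t, 0 < t →
      deriv (deriv (h q γ)) t =
        -γ * q * (q + 1) * (q - 2) * (q + 2) * t ^ (q / 2 - 2) * f q γ t) ∧
    (γ < gammaMax q → ∀ t₁ t₂ : ℝ, 0 < t₁ → t₁ < t₂ →
      f q γ t₁ = 0 → f q γ t₂ = 0 → (∀ t ∈ Ioo t₁ t₂, 0 < f q γ t) →
      (∀ t ∈ Ioo t₁ t₂, deriv (deriv (h q γ)) t < 0) ∧
        StrictAntiOn (deriv (h q γ)) (Icc t₁ t₂)) := by
  have part1 : ∀ t, 0 < t →
      deriv (deriv (h q γ)) t =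
        -γ * q * (q + 1) * (q - 2) * (q + 2) * t ^ (q / 2 - 2) * f q γ t := by
    intro t ht
    have hev : deriv (h q γ) =ᶠ[nhds t] h1 q γ := by
      filter_upwards [Ioi_mem_nhds ht] with y hy using (hasDerivAt_h q γ hy).deriv
    rw [hev.deriv_eq, (hasDerivAt_h1 q γ ht).deriv]
    have e1 : t ^ (q / 2 - 2) * t = t ^ (q / 2 - 1) := by
      rw [← Real.rpow_add_one ht.ne' (q / 2 - 2)]; ring_nf
    have e2 : t ^ (q / 2 - 2) * t ^ (q / 2 + 1) = t ^ (q - 1) := by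
      rw [← Real.rpow_add ht]; ring_nf
    simp only [f]
    linear_combination (γ * q * (q + 1) * (q - 2) * (q + 2)) * e1 -
      (γ ^ 2 * q * (q + 1) * (q - 2) * (q + 2)) * e2
  refine ⟨part1, fun _ t₁ t₂ ht₁ hlt _ _ hfpos => ?_⟩
  have hneg : ∀ t ∈ Ioo t₁ t₂, deriv (deriv (h q γ)) t < 0 := by
    intro t ht
    have htpos : 0 < t := ht₁.trans ht.1
    rw [part1 t htpos]
    have hrp : (0 : ℝ) < t ^ (q / 2 - 2) := Real.rpow_pos_of_pos htpos _
    have hc : -γ * q * (q + 1) * (q - 2) * (q + 2) < 0 := by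
      have : 0 < γ * q * (q + 1) * (q - 2) * (q + 2) :=
        mul_pos (mul_pos (mul_pos (mul_pos hγ (by linarith)) (by linarith)) (by linarith))
          (by linarith)
      linarith
    exact mul_neg_of_neg_of_pos (mul_neg_of_neg_of_pos hc hrp) (hfpos t ht)
  refine ⟨hneg, ?_⟩
  have hsub : Icc t₁ t₂ ⊆ Ioi (0 : ℝ) := fun x hx => lt_of_lt_of_le ht₁ hx.1
  have hcont1 : ContinuousOn (h1 q γ) (Ioi (0 : ℝ)) := by
    have crpow : ∀ p : ℝ, ContinuousOn (fun x : ℝ => x ^ p) (Ioi (0 : ℝ)) := fun p x hx =>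
      (Real.continuousAt_rpow_const x p (Or.inl (ne_of_gt hx))).continuousWithinAt
    exact ((continuousOn_const.sub (continuousOn_const.mul (crpow _))).add
      (continuousOn_const.mul (crpow _))).add (continuousOn_const.mul (crpow _))
  have hcont : ContinuousOn (deriv (h q γ)) (Icc t₁ t₂) :=
    ContinuousOn.congr (hcont1.mono hsub) (fun x hx => (hasDerivAt_h q γ (hsub hx)).deriv)
  refine strictAntiOn_of_deriv_neg (convex_Icc _ _) hcont ?_
  intro x hx
  rw [interior_Icc] at hx
  exact hneg x hx
end
end

section
/- Let q > 2, γ > 0, and let t₁ > 0 satisfy f(t₁) = 0 (equivalently γ·t₁^{q/2} = (t₁ − 1)/t₁). Then h'(t₁) = −((q+1)/t₁²)·(q·t₁ − (q+2))². In particular h'(t₁) ≤ 0, with h'(t₁) < 0 unless t₁ = (q+2)/q. -/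
open Real Set Filter MeasureTheory

noncomputable section

/-- For `q > 2`, `γ > 0`, and `t₁ > 0` with `f(t₁) = 0`:
`h'(t₁) = -((q+1)/t₁²)·(qt₁ - (q+2))²`; in particular `h'(t₁) ≤ 0`, with strict
inequality unless `t₁ = (q+2)/q`. -/
theorem h_deriv_at_root (q γ t₁ : ℝ) (hq : 2 < q) (hγ : 0 < γ) (ht₁ : 0 < t₁)
    (hz : f q γ t₁ = 0) :
    deriv (h q γ) t₁ = -((q + 1) / t₁ ^ 2) * (q * t₁ - (q + 2)) ^ 2 ∧
    deriv (h q γ) t₁ ≤ 0 ∧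
    (t₁ ≠ (q + 2) / q → deriv (h q γ) t₁ < 0) := by
  have hrp : ∀ c : ℝ, HasDerivAt (fun x : ℝ => x ^ c) (c * t₁ ^ (c - 1)) t₁ :=
    fun c => Real.hasDerivAt_rpow_const (Or.inl ht₁.ne')
  have H : HasDerivAt (h q γ)
      (0 - 4 * (q + 1) * 1 - 4 * γ * (q + 1) * (q - 2) * ((q / 2 + 1) * t₁ ^ (q / 2 + 1 - 1)) +
        4 * γ * (q + 2) * (q + 1) * (q / 2 * t₁ ^ (q / 2 - 1)) +
        γ ^ 2 * (q + 2) * (q - 2) * ((q + 1) * t₁ ^ (q + 1 - 1))) t₁ := by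
    exact ((((hasDerivAt_const t₁ (4 * (q - 2))).sub
      ((hasDerivAt_id t₁).const_mul (4 * (q + 1)))).sub
      ((hrp (q / 2 + 1)).const_mul (4 * γ * (q + 1) * (q - 2)))).add
      ((hrp (q / 2)).const_mul (4 * γ * (q + 2) * (q + 1)))).add
      ((hrp (q + 1)).const_mul (γ ^ 2 * (q + 2) * (q - 2)))
  have main : deriv (h q γ) t₁ = -((q + 1) / t₁ ^ 2) * (q * t₁ - (q + 2)) ^ 2 := by
    rw [H.deriv]
    have e1 : q / 2 + 1 - 1 = q / 2 := by ring
    have e3 : q + 1 - 1 = q := by ring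
    rw [e1, e3]
    set A := t₁ ^ (q / 2) with hA
    have h2 : t₁ ^ (q / 2 - 1) = A / t₁ := by
      rw [hA, Real.rpow_sub ht₁, Real.rpow_one]
    have h3 : t₁ ^ q = A * A := by
      rw [hA, ← Real.rpow_add ht₁]; ring_nf
    rw [h2, h3]
    have keq : γ * A * t₁ = t₁ - 1 := by
      have hsplit : t₁ ^ (q / 2 + 1) = A * t₁ := by
        rw [hA, Real.rpow_add ht₁, Real.rpow_one]
      simp only [f, hsplit] at hz
      linarith
    field_simp
    linear_combination ((q + 1) * (2 * (q ^ 2 - 4) * (γ * A * t₁) - 2 * (q ^ 2 - 4) * t₁ -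
        2 * (q ^ 2 - 4) + 4 * q * (q + 2))) * keq
  have hq1 : 0 < (q + 1) / t₁ ^ 2 := by positivity
  refine ⟨main, ?_, ?_⟩
  · rw [main]
    nlinarith [sq_nonneg (q * t₁ - (q + 2))]
  · intro hne
    rw [main]
    have hqmul : q * t₁ - (q + 2) ≠ 0 := by
      intro hcon
      apply hne
      field_simp
      linarith
    have : 0 < (q * t₁ - (q + 2)) ^ 2 := by positivity
    nlinarith
end
end

section
/- Let q > 2 and γ ∈ (0, γ_max). Then h'(t) < 0 for every t ∈ [t₁, t₂]. -/
open Real Set Filter MeasureTheory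

noncomputable section

/-- Key polynomial inequality: with `v = γ t^{q/2+1}`, one has
`h'(t)·t² = (q+1)·G(v,t)` where `G` is the quadratic below, and `G < 0`. -/
lemma keyG (q t v : ℝ) (hq : 2 < q) (ht : 1 < t) (hv : 0 < v)
    (hvt : v ≤ t - 1) (hne : v = t - 1 → q * (t - 1) ≠ 2) :
    (q+2)*(q-2)*v^2 - 2*(q+2)*(q-2)*v*t + 2*q*(q+2)*v - 4*t^2 < 0 := by
  rcases lt_or_eq_of_le hvt with hlt | heq
  · have h0 : 0 < t - 1 - v := by linarith
    have hid : ((q+2)*(q-2)*v^2 - 2*(q+2)*(q-2)*v*t + 2*q*(q+2)*v - 4*t^2) * (t-1)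
        = -(v*(q*(t-1)-2)^2) - 4*t^2*(t-1-v) - (q^2-4)*(t-1)*(v*(t-1-v)) := by ring
    have h1 : 0 ≤ v*(q*(t-1)-2)^2 := mul_nonneg hv.le (sq_nonneg _)
    have h2 : 0 < 4*t^2*(t-1-v) := by positivity
    have h3 : 0 ≤ (q^2-4)*(t-1)*(v*(t-1-v)) := by
      apply mul_nonneg (mul_nonneg (by nlinarith) (by linarith))
      exact mul_nonneg hv.le h0.le
    nlinarith [hid]
  · have hne2 : q*(t-1) - 2 ≠ 0 := sub_ne_zero.2 (hne heq)
    have hpos : 0 < (q*(t-1)-2)^2 := lt_of_le_of_ne (sq_nonneg _) (Ne.symm (pow_ne_zero 2 hne2))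
    subst heq; nlinarith [hpos]

/-- Since `γ < γ_max`, the function `f` is strictly positive at `1 + 2/q`. -/
lemma f_mid_pos (q γ : ℝ) (hq : 2 < q) (hγ : γ ∈ Ioo 0 (gammaMax q)) :
    0 < f q γ (1 + 2/q) := by
  have hq0 : (0:ℝ) < q := by linarith
  have hb : (0:ℝ) < 1 + 2/q := by positivity
  have hbp : (0:ℝ) < (1 + 2/q) ^ (q/2+1) := Real.rpow_pos_of_pos hb _
  have hlt : γ * (1 + 2/q) ^ (q/2+1) < gammaMax q * (1 + 2/q) ^ (q/2+1) :=
    mul_lt_mul_of_pos_right hγ.2 hbp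
  have hcalc : gammaMax q * (1 + 2/q) ^ (q/2+1) = 2/q := by
    unfold gammaMax
    rw [mul_assoc, ← Real.rpow_add hb, show -(q/2) + (q/2+1) = 1 by ring, Real.rpow_one]
    field_simp
  rw [hcalc] at hlt
  simp only [f]
  linarith

/-- The derivative of `h`. -/
lemma h_deriv (q γ t : ℝ) (ht : 0 < t) :
    deriv (h q γ) t = -(4 * (q + 1)) - 4 * γ * (q + 1) * (q - 2) * ((q/2+1) * t ^ (q/2))
      + 4 * γ * (q + 2) * (q + 1) * ((q/2) * t ^ (q/2-1))
      + γ ^ 2 * (q + 2) * (q - 2) * ((q+1) * t ^ q) := by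
  have r1 : HasDerivAt (fun x : ℝ => x ^ (q/2+1)) ((q/2+1) * t ^ (q/2+1-1)) t :=
    Real.hasDerivAt_rpow_const (Or.inl ht.ne')
  have r2 : HasDerivAt (fun x : ℝ => x ^ (q/2)) ((q/2) * t ^ (q/2-1)) t :=
    Real.hasDerivAt_rpow_const (Or.inl ht.ne')
  have r3 : HasDerivAt (fun x : ℝ => x ^ (q+1)) ((q+1) * t ^ (q+1-1)) t :=
    Real.hasDerivAt_rpow_const (Or.inl ht.ne')
  have hd : HasDerivAt (h q γ)
      (0 - 4 * (q + 1) * 1 - 4 * γ * (q + 1) * (q - 2) * ((q/2+1) * t ^ (q/2+1-1))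
        + 4 * γ * (q + 2) * (q + 1) * ((q/2) * t ^ (q/2-1))
        + γ ^ 2 * (q + 2) * (q - 2) * ((q+1) * t ^ (q+1-1))) t := by
    exact ((((hasDerivAt_const t (4*(q-2))).sub ((hasDerivAt_id t).const_mul (4*(q+1)))).sub
      (r1.const_mul (4*γ*(q+1)*(q-2)))).add (r2.const_mul (4*γ*(q+2)*(q+1)))).add
      (r3.const_mul (γ^2*(q+2)*(q-2)))
  rw [hd.deriv, show q/2+1-1 = q/2 by ring, show q+1-1 = q by ring]
  ring

/-- For `q > 2`, `γ ∈ (0, γ_max)`, and the two positive zeros `t₁ < t₂` of `f`: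
`h' < 0` on `[t₁, t₂]`. -/
theorem h_deriv_neg (q γ : ℝ) (hq : 2 < q) (hγ : γ ∈ Ioo 0 (gammaMax q))
    (t₁ t₂ : ℝ) (ht₁ : 0 < t₁) (h₁₂ : t₁ < t₂)
    (hz₁ : f q γ t₁ = 0) (hz₂ : f q γ t₂ = 0)
    (huniq : ∀ t, 0 < t → f q γ t = 0 → t = t₁ ∨ t = t₂) :
    ∀ t ∈ Icc t₁ t₂, deriv (h q γ) t < 0 := by
  have hγ0 : 0 < γ := hγ.1
  have hq0 : (0:ℝ) < q := by linarith
  -- t₁ > 1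
  have ht₁1 : 1 < t₁ := by
    have hp : 0 < t₁ ^ (q/2+1) := Real.rpow_pos_of_pos ht₁ _
    have := hz₁
    simp only [f] at this
    nlinarith [mul_pos hγ0 hp]
  intro t ht
  obtain ⟨htl, htr⟩ := ht
  have ht0 : 0 < t := lt_of_lt_of_le ht₁ htl
  have ht1 : 1 < t := lt_of_lt_of_le ht₁1 htl
  -- f t ≥ 0 on [t₁, t₂]
  have hft : 0 ≤ f q γ t := by
    rcases eq_or_lt_of_le htl with h1 | h1
    · rw [← h1]; exact le_of_eq hz₁.symm
    rcases eq_or_lt_of_le htr with h2 | h2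
    · rw [h2]; exact le_of_eq hz₂.symm
    -- interior: strict concavity of f
    have hcx := strictConvexOn_rpow (p := q/2+1) (by linarith)
    have hd : (0:ℝ) < t₂ - t₁ := by linarith
    have hd' : t₂ - t₁ ≠ 0 := ne_of_gt hd
    have ha : 0 < (t₂ - t)/(t₂ - t₁) := div_pos (by linarith) hd
    have hb : 0 < (t - t₁)/(t₂ - t₁) := div_pos (by linarith) hd
    have hab : (t₂ - t)/(t₂ - t₁) + (t - t₁)/(t₂ - t₁) = 1 := by field_simp; ring
    have hcomb : ((t₂ - t)/(t₂ - t₁)) * t₁ + ((t - t₁)/(t₂ - t₁)) * t₂ = t := by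
      field_simp; ring
    have hkey := hcx.2 (mem_Ici.2 ht₁.le) (mem_Ici.2 (ht₁.trans h₁₂).le)
      (ne_of_lt h₁₂) ha hb hab
    simp only [smul_eq_mul] at hkey
    rw [hcomb] at hkey
    have hmul : γ * t ^ (q/2+1)
        < γ * (((t₂ - t)/(t₂ - t₁)) * t₁ ^ (q/2+1) + ((t - t₁)/(t₂ - t₁)) * t₂ ^ (q/2+1)) :=
      mul_lt_mul_of_pos_left hkey hγ0
    have hγ1 : γ * t₁ ^ (q/2+1) = t₁ - 1 := by have := hz₁; simp only [f] at this; linarith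
    have hγ2 : γ * t₂ ^ (q/2+1) = t₂ - 1 := by have := hz₂; simp only [f] at this; linarith
    have e : γ * (((t₂ - t)/(t₂ - t₁)) * t₁ ^ (q/2+1) + ((t - t₁)/(t₂ - t₁)) * t₂ ^ (q/2+1))
        = ((t₂ - t)/(t₂ - t₁)) * (γ * t₁ ^ (q/2+1))
          + ((t - t₁)/(t₂ - t₁)) * (γ * t₂ ^ (q/2+1)) := by ring
    rw [hγ1, hγ2] at e
    have e2 : ((t₂ - t)/(t₂ - t₁)) * (t₁ - 1) + ((t - t₁)/(t₂ - t₁)) * (t₂ - 1)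
        = (((t₂ - t)/(t₂ - t₁)) * t₁ + ((t - t₁)/(t₂ - t₁)) * t₂)
          - (((t₂ - t)/(t₂ - t₁)) + ((t - t₁)/(t₂ - t₁))) := by ring
    rw [hcomb, hab] at e2
    simp only [f]
    rw [e, e2] at hmul
    linarith
  -- the constraint v ≤ t - 1 and the non-degeneracy
  set v : ℝ := γ * t ^ (q/2+1) with hv_def
  have hv : 0 < v := mul_pos hγ0 (Real.rpow_pos_of_pos ht0 _)
  have hvt : v ≤ t - 1 := by simp only [f] at hft; simp only [hv_def]; linarith
  have hne : v = t - 1 → q * (t - 1) ≠ 2 := by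
    intro he hcon
    rw [hv_def] at he
    have h5 : (t - 1) * q = 2 := by linarith [hcon]
    have hteq : t = 1 + 2/q := by field_simp; linarith
    have hfz : f q γ t = 0 := by simp only [f]; linarith
    have hmid := f_mid_pos q γ hq hγ
    rw [← hteq] at hmid
    linarith
  have key := keyG q t v hq ht1 hv hvt hne
  -- rewrite powers of t
  have eA : t ^ (q/2+1) = t ^ (q/2) * t := by
    rw [Real.rpow_add ht0, Real.rpow_one]
  have eB : t ^ (q/2-1) = t ^ (q/2) / t := by
    rw [Real.rpow_sub ht0, Real.rpow_one]
  have eD : t ^ q = t ^ (q/2) * t ^ (q/2) := by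
    rw [← Real.rpow_add ht0]; congr 1; ring
  rw [h_deriv q γ t ht0, eB, eD]
  have hvA : v = γ * (t ^ (q/2) * t) := by rw [hv_def, eA]
  set B : ℝ := t ^ (q/2) with hB_def
  -- multiply through by t²: h'(t)·t² = (q+1)·G(v,t)
  have hmain : (-(4 * (q + 1)) - 4 * γ * (q + 1) * (q - 2) * ((q/2+1) * B)
      + 4 * γ * (q + 2) * (q + 1) * ((q/2) * (B / t))
      + γ ^ 2 * (q + 2) * (q - 2) * ((q+1) * (B * B))) * t^2
      = (q+1) * ((q+2)*(q-2)*v^2 - 2*(q+2)*(q-2)*v*t + 2*q*(q+2)*v - 4*t^2) := by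
    rw [hvA]; field_simp; ring
  nlinarith [hmain, key, (show (0:ℝ) < q + 1 by linarith), (show (0:ℝ) < t^2 by positivity)]
end
end
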